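/- arXiv:0907.1075 — 6 statements merged into one kernel-verified Lean document; each statement's English description precedes it below -/
import Mathlib

section
/- Let F be a free group with finite bases 𝒜 and ℬ. There exists a constant C ≥ 0 such that for all w, w' ∈ F with |w|_𝒜 + |w'|_𝒜 = |ww'|_𝒜, one has |w|_ℬ + |w'|_ℬ − |ww'|_ℬ ≤ 2C. -/
namespace BCL
open FreeGroup List

variable {γ : Type} [DecidableEq γ]

/-- Reducedness as a chain condition. -/
def Rd (l : List (γ × Bool)) : Prop := l.Chain' (fun a b => b ≠ (a.1, !a.2))

lemma rd_reduce {l : List (γ × Bool)} (h : Rd l) : FreeGroup.reduce l = l := by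
  induction l with
  | nil => rfl
  | cons x t ih =>
    rw [FreeGroup.reduce.cons, ih h.tail]
    cases t with
    | nil => rfl
    | cons hd tl =>
      have hx : hd ≠ (x.1, !x.2) := (List.isChain_cons_cons.1 h).1
      dsimp only
      rw [if_neg]
      rintro ⟨h1, h2⟩
      exact hx (by rcases hd with ⟨a, b⟩; rcases x with ⟨c, d⟩; simp_all)

lemma reduce_rd (l : List (γ × Bool)) : Rd (FreeGroup.reduce l) := by
  induction l with
  | nil => exact List.isChain_nil
  | cons x t ih =>
    rw [FreeGroup.reduce.cons]
    rcases h : FreeGroup.reduce t with _ | ⟨hd, tl⟩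
    · exact List.isChain_singleton x
    · rw [h] at ih
      dsimp only
      split_ifs with hc
      · exact ih.tail
      · refine List.isChain_cons_cons.2 ⟨?_, ih⟩
        rintro rfl
        exact hc ⟨rfl, by simp⟩

lemma rd_toWord (x : FreeGroup γ) : Rd x.toWord := by
  rw [← FreeGroup.reduce_toWord]; exact reduce_rd _

lemma toWord_mk_rd {l : List (γ × Bool)} (h : Rd l) : (FreeGroup.mk l).toWord = l := by
  rw [FreeGroup.toWord_mk, rd_reduce h]

lemma norm_mk_rd {l : List (γ × Bool)} (h : Rd l) : norm (FreeGroup.mk l) = l.length := by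
  rw [FreeGroup.norm, toWord_mk_rd h]

/-- Head-disjointness condition. -/
def Hd (a b : FreeGroup γ) : Prop :=
  ∀ x, a.toWord.head? = some x → b.toWord.head? ≠ some x

lemma nsymm (a b : FreeGroup γ) : norm (a⁻¹ * b) = norm (b⁻¹ * a) := by
  rw [← FreeGroup.norm_inv_eq]; congr 1; group

/-- If heads are disjoint, no cancellation. -/
lemma norm_of_hd {a b : FreeGroup γ} (h : Hd a b) : norm (a⁻¹ * b) = norm a + norm b := by
  have key : a⁻¹ * b = FreeGroup.mk (invRev a.toWord ++ b.toWord) := by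
    rw [← FreeGroup.mul_mk, ← FreeGroup.inv_mk, FreeGroup.mk_toWord, FreeGroup.mk_toWord]
  have hrd : Rd (invRev a.toWord ++ b.toWord) := by
    refine List.isChain_append.2 ⟨?_, rd_toWord b, ?_⟩
    · have := rd_toWord a⁻¹
      rwa [FreeGroup.toWord_inv] at this
    · intro x hx y hy
      unfold invRev at hx
      rw [List.getLast?_reverse, List.head?_map] at hx
      rcases ha : a.toWord.head? with _ | c
      · rw [ha] at hx; simp at hx
      · rw [ha] at hx
        have hx' : x = (c.1, !c.2) := by
          simpa [Option.mem_def] using hx.symm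
        subst hx'
        rintro rfl
        exact h c ha (by simpa [Bool.not_not] using hy)
  rw [key, norm_mk_rd hrd, List.length_append, invRev_length]; rfl

/-- Decompose a nontrivial element into head letter and tail. -/
lemma head_decomp {a : FreeGroup γ} {c : γ × Bool} (h : a.toWord.head? = some c) :
    ∃ a₁ : FreeGroup γ, a = FreeGroup.mk [c] * a₁ ∧ norm a = 1 + norm a₁ := by
  rcases ht : a.toWord with _ | ⟨c', t⟩
  · rw [ht] at h; simp at h
  · rw [ht] at h
    simp only [List.head?_cons, Option.some.injEq] at h
    subst h
    refine ⟨FreeGroup.mk t, ?_, ?_⟩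
    · rw [FreeGroup.mul_mk, List.singleton_append, ← ht, FreeGroup.mk_toWord]
    · have hrd : Rd t := by
        have := rd_toWord a; rw [ht] at this; exact this.tail
      rw [FreeGroup.norm, ht, norm_mk_rd hrd, List.length_cons]
      omega

/-- Existence of the median of `1, a, b`. -/
lemma median (a b : FreeGroup γ) : ∃ q : FreeGroup γ,
    norm q + norm (q⁻¹ * a) = norm a ∧ norm q + norm (q⁻¹ * b) = norm b ∧
    norm (a⁻¹ * q) + norm (q⁻¹ * b) = norm (a⁻¹ * b) := by
  suffices H : ∀ (k : ℕ) (a b : FreeGroup γ), norm a + norm b ≤ k → ∃ q : FreeGroup γ,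
      norm q + norm (q⁻¹ * a) = norm a ∧ norm q + norm (q⁻¹ * b) = norm b ∧
      norm (a⁻¹ * q) + norm (q⁻¹ * b) = norm (a⁻¹ * b) by
    exact H (norm a + norm b) a b le_rfl
  intro k
  induction k with
  | zero =>
    intro a b hab
    have ha : a = 1 := by
      rw [← FreeGroup.norm_eq_zero]; omega
    have hb : b = 1 := by
      rw [← FreeGroup.norm_eq_zero]; omega
    subst ha; subst hb
    exact ⟨1, by simp⟩
  | succ k ih =>
    intro a b hab
    by_cases hH : ∃ c, a.toWord.head? = some c ∧ b.toWord.head? = some c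
    case neg =>
      have hHd : Hd a b := fun x hxa hxb => hH ⟨x, hxa, hxb⟩
      refine ⟨1, by simp, by simp, ?_⟩
      have := norm_of_hd hHd
      simp only [mul_one, inv_one, one_mul] at *
      rw [FreeGroup.norm_inv_eq, this]
    case pos =>
      obtain ⟨c, hca, hcb⟩ := hH
      obtain ⟨a₁, ha1, ha2⟩ := head_decomp hca
      obtain ⟨b₁, hb1, hb2⟩ := head_decomp hcb
      obtain ⟨q', hq1, hq2, hq3⟩ := ih a₁ b₁ (by omega)
      set h : FreeGroup γ := FreeGroup.mk [c] with hh
      refine ⟨h * q', ?_, ?_, ?_⟩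
      all_goals {
        have e1 : (h * q')⁻¹ * a = q'⁻¹ * a₁ := by rw [ha1]; group
        have e2 : (h * q')⁻¹ * b = q'⁻¹ * b₁ := by rw [hb1]; group
        have e3 : a⁻¹ * (h * q') = a₁⁻¹ * q' := by rw [ha1]; group
        have e4 : a⁻¹ * b = a₁⁻¹ * b₁ := by rw [ha1, hb1]; group
        have hnh : norm (h * q') = 1 + norm q' := by
          have le1 : norm (h * q') ≤ norm h + norm q' := FreeGroup.norm_mul_le _ _
          have le2 : norm h ≤ 1 := FreeGroup.norm_mk_le
          have le3 : norm a ≤ norm (h * q') + norm ((h * q')⁻¹ * a) := by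
            calc norm a = norm ((h * q') * ((h * q')⁻¹ * a)) := by group
              _ ≤ _ := FreeGroup.norm_mul_le _ _
          rw [e1] at le3
          omega
        simp only [hnh, e1, e2, e3, e4, ha2, hb2]; omega
      }

/-- Separation: if `z` lies between `a` and `b`, then for any `p`,
`z` lies between `a, p` or between `p, b`. -/
lemma sep' (a b p z : FreeGroup γ)
    (h : norm (a⁻¹ * z) + norm (z⁻¹ * b) = norm (a⁻¹ * b)) :
    norm (a⁻¹ * z) + norm (z⁻¹ * p) = norm (a⁻¹ * p) ∨
    norm (p⁻¹ * z) + norm (z⁻¹ * b) = norm (p⁻¹ * b) := by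
  -- reduce to basepoint z = 1
  set x := z⁻¹ * a with hx
  set y := z⁻¹ * b with hy
  set p' := z⁻¹ * p with hp
  have exy : x⁻¹ * y = a⁻¹ * b := by rw [hx, hy]; group
  have exp : x⁻¹ * p' = a⁻¹ * p := by rw [hx, hp]; group
  have epy : p'⁻¹ * y = p⁻¹ * b := by rw [hp, hy]; group
  have h0 : norm x + norm y = norm (x⁻¹ * y) := by
    rw [exy, ← h, hx, hy, nsymm z a, nsymm z b]
  -- main case analysis on heads
  have main : norm x + norm p' = norm (x⁻¹ * p') ∨ norm p' + norm y = norm (p'⁻¹ * y) := by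
    by_cases hxe : x.toWord = []
    · left
      have hx1 : x = 1 := FreeGroup.toWord_eq_nil_iff.1 hxe
      rw [hx1]; simp
    by_cases hye : y.toWord = []
    · right
      have hy1 : y = 1 := FreeGroup.toWord_eq_nil_iff.1 hye
      rw [hy1]; simp [FreeGroup.norm_inv_eq]
    by_cases hpe : p'.toWord = []
    · left
      have hp1 : p' = 1 := FreeGroup.toWord_eq_nil_iff.1 hpe
      rw [hp1]; simp [FreeGroup.norm_inv_eq]
    -- all nonempty; heads of x and y differ
    obtain ⟨cx, hcx⟩ : ∃ c, x.toWord.head? = some c := by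
      cases hx' : x.toWord with
      | nil => exact absurd hx' hxe
      | cons c t => exact ⟨c, rfl⟩
    obtain ⟨cy, hcy⟩ : ∃ c, y.toWord.head? = some c := by
      cases hy' : y.toWord with
      | nil => exact absurd hy' hye
      | cons c t => exact ⟨c, rfl⟩
    obtain ⟨cp, hcp⟩ : ∃ c, p'.toWord.head? = some c := by
      cases hp' : p'.toWord with
      | nil => exact absurd hp' hpe
      | cons c t => exact ⟨c, rfl⟩
    have hxy : cx ≠ cy := by
      rintro rfl
      obtain ⟨x₁, hx1, hx2⟩ := head_decomp hcx
      obtain ⟨y₁, hy1, hy2⟩ := head_decomp hcy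
      have : x⁻¹ * y = x₁⁻¹ * y₁ := by rw [hx1, hy1]; group
      have hle : norm (x⁻¹ * y) ≤ norm x₁ + norm y₁ := by
        rw [this]
        calc norm (x₁⁻¹ * y₁) ≤ norm x₁⁻¹ + norm y₁ := FreeGroup.norm_mul_le _ _
          _ = norm x₁ + norm y₁ := by rw [FreeGroup.norm_inv_eq]
      omega
    by_cases hpx : cp = cx
    · right
      have hd : Hd p' y := by
        intro c hc hc'
        rw [hcp] at hc
        rw [hcy] at hc'
        cases hc; cases hc'
        exact hxy hpx.symm
      exact (norm_of_hd hd).symm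
    · left
      have hd : Hd x p' := by
        intro c hc hc'
        rw [hcx] at hc
        rw [hcp] at hc'
        cases hc; cases hc'
        exact hpx rfl
      exact (norm_of_hd hd).symm
  rcases main with h1 | h1
  · left
    rw [exp] at h1
    rw [← h1, hx, hp, nsymm z a, nsymm z p]
  · right
    rw [epy] at h1
    rw [← h1, hp, hy, nsymm z p, nsymm z b]

/-- Crossing lemma: a chain with steps `≤ L` passes within `L` of any point
between its endpoints. -/
lemma cross (c : ℕ → FreeGroup γ) (z : FreeGroup γ) (L : ℕ)
    (hstep : ∀ i, norm ((c i)⁻¹ * c (i + 1)) ≤ L) :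
    ∀ (k s t : ℕ), t = s + k →
      norm ((c s)⁻¹ * z) + norm (z⁻¹ * c t) = norm ((c s)⁻¹ * c t) →
      ∃ i, s ≤ i ∧ i ≤ t ∧ norm ((c i)⁻¹ * z) ≤ L := by
  intro k
  induction k with
  | zero =>
    intro s t ht hbet
    have hts : t = s := by omega
    subst hts
    have hcc : (c t)⁻¹ * c t = 1 := inv_mul_cancel _
    rw [hcc] at hbet
    simp only [FreeGroup.norm_one] at hbet
    exact ⟨t, le_rfl, le_rfl, by omega⟩
  | succ k ih =>
    intro s t ht hbet
    rcases sep' (c s) (c t) (c (s + 1)) z hbet with h1 | h1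
    · exact ⟨s, le_rfl, by omega, by have := hstep s; omega⟩
    · obtain ⟨i, hi1, hi2, hi3⟩ := ih (s + 1) t (by omega) h1
      exact ⟨i, by omega, hi2, hi3⟩

/-- Lipschitz bound for homomorphisms of free groups. -/
lemma lip {δ : Type} [DecidableEq δ] (f : FreeGroup γ →* FreeGroup δ) (L : ℕ)
    (hL : ∀ g : γ, norm (f (FreeGroup.of g)) ≤ L) (x : FreeGroup γ) :
    norm (f x) ≤ L * norm x := by
  suffices H : ∀ l : List (γ × Bool), norm (f (FreeGroup.mk l)) ≤ L * l.length by
    have := H x.toWord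
    rwa [FreeGroup.mk_toWord] at this
  intro l
  induction l with
  | nil =>
    have : FreeGroup.mk ([] : List (γ × Bool)) = 1 := rfl
    simp [this]
  | cons c t ih =>
    have hsplit : FreeGroup.mk (c :: t) = FreeGroup.mk [c] * FreeGroup.mk t := by
      rw [FreeGroup.mul_mk]; rfl
    have hone : norm (f (FreeGroup.mk [c])) ≤ L := by
      rcases c with ⟨g, _ | _⟩
      · have : FreeGroup.mk [(g, false)] = (FreeGroup.of g)⁻¹ := by
          rw [FreeGroup.of, FreeGroup.inv_mk]; rfl
        rw [this, _root_.map_inv, FreeGroup.norm_inv_eq]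
        exact hL g
      · exact hL g
    calc norm (f (FreeGroup.mk (c :: t)))
        ≤ norm (f (FreeGroup.mk [c])) + norm (f (FreeGroup.mk t)) := by
          rw [hsplit, _root_.map_mul]; exact FreeGroup.norm_mul_le _ _
      _ ≤ L + L * t.length := by have := ih; omega
      _ = L * (c :: t).length := by rw [List.length_cons]; ring

end BCL

open FreeGroup List BCL in
/-- Bounded cancellation lemma (Cooper): for two finite bases `𝒜`, `ℬ` of a free group
(the `ℬ`-structure being given by an isomorphism `e : FreeGroup β ≃* FreeGroup α`),
there is `C` such that if the `𝒜`-words of `w` and `w'` concatenate without cancellation,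
then at most `2C` letters cancel in the `ℬ`-words. -/
theorem stmt6 {α β : Type} [Fintype α] [Fintype β] [DecidableEq α] [DecidableEq β]
    (e : FreeGroup β ≃* FreeGroup α) :
    ∃ C : ℕ, ∀ w w' : FreeGroup α,
      (FreeGroup.toWord w).length + (FreeGroup.toWord w').length
          = (FreeGroup.toWord (w * w')).length →
      (FreeGroup.toWord (e.symm w)).length + (FreeGroup.toWord (e.symm w')).length
          ≤ (FreeGroup.toWord (e.symm (w * w'))).length + 2 * C := by
  classical
  set ψ : FreeGroup α →* FreeGroup β := e.symm.toMonoidHom with hψ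
  set L : ℕ := Finset.univ.sup (fun a : α => norm (ψ (FreeGroup.of a))) with hL
  set L' : ℕ := Finset.univ.sup (fun b : β => norm (e (FreeGroup.of b))) with hL'
  have hLa : ∀ a : α, norm (ψ (FreeGroup.of a)) ≤ L := by
    intro a
    rw [hL]
    exact Finset.le_sup (f := fun a : α => norm (ψ (FreeGroup.of a))) (Finset.mem_univ a)
  have hLb : ∀ b : β, norm (e.toMonoidHom (FreeGroup.of b)) ≤ L' := by
    intro b
    rw [hL']
    exact Finset.le_sup (f := fun b : β => norm (e (FreeGroup.of b))) (Finset.mem_univ b)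
  have lipψ : ∀ x, norm (ψ x) ≤ L * norm x := lip ψ L hLa
  have lipe : ∀ y, norm (e.toMonoidHom y) ≤ L' * norm y := lip e.toMonoidHom L' hLb
  have lower : ∀ x : FreeGroup α, norm x ≤ L' * norm (ψ x) := by
    intro x
    have := lipe (ψ x)
    have hx : e.toMonoidHom (ψ x) = x := e.apply_symm_apply x
    rwa [hx] at this
  refine ⟨2 * L * L * L' + L, ?_⟩
  intro w w' h
  -- setup words
  set u := w.toWord with hu
  set v := w'.toWord with hv
  set l := u ++ v with hldef
  have hmul : w * w' = FreeGroup.mk l := by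
    rw [hldef, ← FreeGroup.mul_mk, hu, hv, FreeGroup.mk_toWord, FreeGroup.mk_toWord]
  have hlred : Rd l := by
    have hred : FreeGroup.reduce l = l := by
      have hsub : FreeGroup.reduce l <+ l := FreeGroup.reduce.red.sublist
      apply hsub.eq_of_length
      have : (w * w').toWord = FreeGroup.reduce l := by rw [hmul, FreeGroup.toWord_mk]
      rw [← this, ← h, hldef, List.length_append]
    rw [← hred]; exact reduce_rd l
  set m := u.length with hm
  set n := v.length with hn
  set N := m + n with hN
  have hlen : l.length = N := by rw [hldef, List.length_append]
  -- the chain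
  set p : ℕ → FreeGroup α := fun i => FreeGroup.mk (l.take i) with hp
  have hp0 : p 0 = 1 := rfl
  have hpm : p m = w := by
    rw [hp]
    simp only [hldef, hm, List.take_left]
    rw [hu, FreeGroup.mk_toWord]
  have hpN : p N = w * w' := by
    rw [hp, hmul]
    simp only
    rw [List.take_of_length_le (by omega)]
  have hseg : ∀ i j, i ≤ j → (p i)⁻¹ * p j = FreeGroup.mk ((l.drop i).take (j - i)) := by
    intro i j hij
    have htake : l.take j = l.take i ++ (l.drop i).take (j - i) := by
      rw [← List.take_add]
      congr 1
      omega
    rw [hp]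
    simp only
    rw [htake, ← FreeGroup.mul_mk]
    group
  have hseg_le : ∀ i j, i ≤ j → norm ((p i)⁻¹ * p j) ≤ j - i := by
    intro i j hij
    rw [hseg i j hij]
    calc norm (FreeGroup.mk ((l.drop i).take (j - i))) ≤ ((l.drop i).take (j - i)).length :=
          FreeGroup.norm_mk_le
      _ ≤ j - i := by rw [List.length_take]; omega
  have hseg_eq : ∀ i j, i ≤ j → j ≤ N → norm ((p i)⁻¹ * p j) = j - i := by
    intro i j hij hjN
    rw [hseg i j hij]
    have hrd : Rd ((l.drop i).take (j - i)) :=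
      (hlred.drop i).take (j - i)
    rw [norm_mk_rd hrd, List.length_take, List.length_drop, hlen]
    omega
  -- the image chain
  set Q : ℕ → FreeGroup β := fun i => ψ (p i) with hQ
  have hQstep : ∀ i, norm ((Q i)⁻¹ * Q (i + 1)) ≤ L := by
    intro i
    have : (Q i)⁻¹ * Q (i + 1) = ψ ((p i)⁻¹ * p (i + 1)) := by
      rw [hQ]; simp only [_root_.map_mul, _root_.map_inv]
    rw [this]
    calc norm (ψ ((p i)⁻¹ * p (i + 1))) ≤ L * norm ((p i)⁻¹ * p (i + 1)) := lipψ _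
      _ ≤ L * 1 := by
          have := hseg_le i (i + 1) (by omega)
          exact Nat.mul_le_mul_left L (by omega)
      _ = L := by ring
  -- median of 1, ψ w, ψ (w * w')
  obtain ⟨q, hq1, hq2, hq3⟩ := median (ψ w) (ψ (w * w'))
  have hWV : (ψ w)⁻¹ * ψ (w * w') = ψ w' := by
    rw [← _root_.map_inv, ← _root_.map_mul]
    congr 1
    group
  -- crossing on [0, m]
  obtain ⟨i, hi0, him, hiq⟩ := cross Q q L hQstep m 0 m (by omega) (by
    simp only [hQ, hp0, hpm, _root_.map_one, inv_one, one_mul]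
    exact hq1)
  -- crossing on [m, N]
  obtain ⟨j, hmj, hjN, hjq⟩ := cross Q q L hQstep n m N (by omega) (by
    simp only [hQ, hpm, hpN]
    exact hq3)
  -- j - i is bounded
  have hQij : norm ((Q i)⁻¹ * Q j) ≤ 2 * L := by
    calc norm ((Q i)⁻¹ * Q j) ≤ norm ((Q i)⁻¹ * q) + norm (q⁻¹ * Q j) := by
          have hsplit : (Q i)⁻¹ * Q j = ((Q i)⁻¹ * q) * (q⁻¹ * Q j) := by group
          rw [hsplit]; exact FreeGroup.norm_mul_le _ _
      _ ≤ L + L := by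
          have hs := nsymm q (Q j)
          omega
      _ = 2 * L := by ring
  have hji : j - i ≤ L' * (2 * L) := by
    have h1 : norm ((p i)⁻¹ * p j) = j - i := hseg_eq i j (by omega) hjN
    have h2 : (Q i)⁻¹ * Q j = ψ ((p i)⁻¹ * p j) := by simp only [hQ, _root_.map_mul, _root_.map_inv]
    have h3 := lower ((p i)⁻¹ * p j)
    rw [← h2] at h3
    calc j - i = norm ((p i)⁻¹ * p j) := h1.symm
      _ ≤ L' * norm ((Q i)⁻¹ * Q j) := h3
      _ ≤ L' * (2 * L) := Nat.mul_le_mul_left _ hQij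
  -- the cancellation is bounded
  have hdelta : norm ((ψ w)⁻¹ * q) ≤ 2 * L * L * L' + L := by
    have step1 : norm ((ψ w)⁻¹ * Q i) ≤ L * (m - i) := by
      have e1 : (ψ w)⁻¹ * Q i = ψ ((p m)⁻¹ * p i) := by
        simp only [hQ, hpm, _root_.map_mul, _root_.map_inv]
      have e2 : norm ((p m)⁻¹ * p i) = m - i := by
        rw [nsymm]; exact hseg_eq i m him (by omega)
      calc norm ((ψ w)⁻¹ * Q i) = norm (ψ ((p m)⁻¹ * p i)) := by rw [e1]
        _ ≤ L * norm ((p m)⁻¹ * p i) := lipψ _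
        _ = L * (m - i) := by rw [e2]
    have step2 : L * (m - i) ≤ L * (L' * (2 * L)) := by
      apply Nat.mul_le_mul_left
      omega
    have step3 : L * (L' * (2 * L)) = 2 * L * L * L' := by ring
    calc norm ((ψ w)⁻¹ * q) ≤ norm ((ψ w)⁻¹ * Q i) + norm ((Q i)⁻¹ * q) := by
          have hsplit : (ψ w)⁻¹ * q = ((ψ w)⁻¹ * Q i) * ((Q i)⁻¹ * q) := by group
          rw [hsplit]; exact FreeGroup.norm_mul_le _ _
      _ ≤ 2 * L * L * L' + L := by omega
  -- conclude
  have hWV' : norm ((ψ w)⁻¹ * ψ (w * w')) = norm (ψ w') := by rw [hWV]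
  have hsym1 : norm (q⁻¹ * ψ w) = norm ((ψ w)⁻¹ * q) := nsymm _ _
  show norm (ψ w) + norm (ψ w') ≤ norm (ψ (w * w')) + 2 * (2 * L * L * L' + L)
  omega
end

section
/- Let F be a free group with basis 𝒜, and let w ∈ F be cyclically reduced with respect to 𝒜. If ℬ is another basis of F and B = BCC(𝒜,ℬ) is the bounded cancellation constant, then w = z x z⁻¹ where x is cyclically reduced with respect to ℬ and |z|_ℬ ≤ B. -/
/-- A reduced word is cyclically reduced if its last letter is not the inverse
of its first letter. -/
def CyclRedWord {α : Type} (l : List (α × Bool)) : Prop :=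
  ∀ p q, l.head? = some p → l.getLast? = some q → ¬ (q.1 = p.1 ∧ q.2 = !p.2)

/-- Word length with respect to the basis `ℬ`, given by the isomorphism `e`. -/
def lenB {α β : Type} [DecidableEq β] (e : FreeGroup β ≃* FreeGroup α)
    (w : FreeGroup α) : ℕ :=
  (FreeGroup.toWord (e.symm w)).length

/-- The bounded cancellation constant `BCC(𝒜,ℬ)`: the least `C` satisfying the
bounded cancellation lemma for the bases `𝒜` and `ℬ`. -/
noncomputable def BCC {α β : Type} [DecidableEq α] [DecidableEq β]
    (e : FreeGroup β ≃* FreeGroup α) : ℕ :=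
  sInf {C : ℕ | ∀ w w' : FreeGroup α,
    (FreeGroup.toWord w).length + (FreeGroup.toWord w').length
        = (FreeGroup.toWord (w * w')).length →
    lenB e w + lenB e w' ≤ lenB e (w * w') + 2 * C}

/-!
Let `v = e⁻¹ w` and write its reduced `ℬ`-word as `Z X Z⁻¹` with `X` cyclically reduced
(`FreeGroup.reduceCyclically`). As `w` is cyclically reduced, nothing cancels in the `𝒜`-word of
`w * w`, while exactly `2 |Z|` letters cancel in the `ℬ`-word of `v * v`; so bounded cancellation
gives `|Z| ≤ BCC(𝒜,ℬ)`.

This needs some bounded cancellation constant to exist, since otherwise `BCC` is `sInf ∅ = 0`.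
That is Cooper's lemma, proved in the Cayley tree of `F(ℬ)`: the cancellation between `e⁻¹ w`
and `e⁻¹ w'` is the Gromov product `((e⁻¹ w)⁻¹ | e⁻¹ w')₁`, and translating the images of the
prefixes of the reduced word `w w'` gives a bi-Lipschitz path from `(e⁻¹ w)⁻¹` through `1` to
`e⁻¹ w'`, which cannot stray far from the geodesic between its endpoints.
-/

theorem Nat.exists_le_lt_and_not_succ (p : ℕ → Prop) {a b : ℕ} (hab : a ≤ b) (ha : p a)
    (hb : ¬ p b) : ∃ i, a ≤ i ∧ i < b ∧ p i ∧ ¬ p (i + 1) := by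
  induction b, hab using Nat.le_induction with
  | base => exact absurd ha hb
  | succ b hab ih =>
    by_cases hpb : p b
    · exact ⟨b, hab, b.lt_succ_self, hpb, hb⟩
    · obtain ⟨i, hai, hib, hi⟩ := ih hpb
      exact ⟨i, hai, hib.trans b.lt_succ_self, hi⟩

namespace List

variable {δ : Type*} [DecidableEq δ]

def commonPrefixLength : List δ → List δ → ℕ
  | a :: u, b :: v => if a = b then commonPrefixLength u v + 1 else 0
  | _, _ => 0

@[simp]
theorem commonPrefixLength_nil_left (l : List δ) : commonPrefixLength [] l = 0 := by
  cases l <;> rfl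

@[simp]
theorem commonPrefixLength_nil_right (l : List δ) : commonPrefixLength l [] = 0 := by
  cases l <;> rfl

theorem commonPrefixLength_cons_cons (a b : δ) (u v : List δ) :
    commonPrefixLength (a :: u) (b :: v) = if a = b then commonPrefixLength u v + 1 else 0 :=
  rfl

theorem commonPrefixLength_comm : ∀ u v : List δ, commonPrefixLength u v = commonPrefixLength v u
  | [], v => by simp
  | _ :: _, [] => by simp
  | a :: u, b :: v => by
    simp only [commonPrefixLength_cons_cons, eq_comm (a := a), commonPrefixLength_comm u v]

theorem commonPrefixLength_le_length_left :
    ∀ u v : List δ, commonPrefixLength u v ≤ u.length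
  | [], v => by simp
  | _ :: _, [] => by simp
  | a :: u, b :: v => by
    rw [commonPrefixLength_cons_cons]
    split_ifs
    · exact Nat.succ_le_succ (commonPrefixLength_le_length_left u v)
    · exact Nat.zero_le _

@[simp]
theorem commonPrefixLength_self : ∀ u : List δ, commonPrefixLength u u = u.length
  | [] => rfl
  | a :: u => by simp [commonPrefixLength_cons_cons, commonPrefixLength_self u]

theorem min_commonPrefixLength_le :
    ∀ u v w : List δ,
      min (commonPrefixLength u v) (commonPrefixLength v w) ≤ commonPrefixLength u w
  | [], v, w => by simp
  | _ :: _, [], w => by simp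
  | _ :: _, _ :: _, [] => by simp
  | a :: u, b :: v, c :: w => by
    have ih := min_commonPrefixLength_le u v w
    simp only [commonPrefixLength_cons_cons]
    split_ifs <;> simp_all

end List

namespace FreeGroup

open List

variable {γ δ : Type*} [DecidableEq γ] [DecidableEq δ]

theorem IsReduced.invRev {L : List (γ × Bool)} (h : IsReduced L) : IsReduced (invRev L) :=
  isReduced_iff_reduce_eq.2 (by rw [reduce_invRev, h.reduce_eq])

theorem length_reduce_invRev_append {A B : List (γ × Bool)} (hA : IsReduced A)
    (hB : IsReduced B) :
    (reduce (invRev A ++ B)).length + 2 * A.commonPrefixLength B = A.length + B.length := by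
  induction A generalizing B with
  | nil => simp [hB.reduce_eq]
  | cons a A ih =>
    cases B with
    | nil => simp [reduce_invRev, hA.reduce_eq, invRev_length]
    | cons b B =>
      rw [commonPrefixLength_cons_cons]
      split_ifs with hab
      · subst hab
        have hcancel : reduce (invRev (a :: A) ++ a :: B) = reduce (invRev A ++ B) := by
          have hcons (L : List (γ × Bool)) : mk (a :: L) = mk [a] * mk L := by rw [mul_mk]; rfl
          apply reduce.sound
          rw [← mul_mk, ← mul_mk, ← inv_mk, ← inv_mk, hcons A, hcons B]
          group
        have := ih (hA.infix (suffix_cons a A).isInfix) (hB.infix (suffix_cons a B).isInfix)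
        simp only [hcancel, length_cons]
        omega
      · have hred : IsReduced (invRev (a :: A) ++ b :: B) := by
          refine isChain_append.2 ⟨hA.invRev, hB, ?_⟩
          simp only [invRev, map_cons, reverse_cons, getLast?_append, getLast?_singleton,
            Option.some_or, Option.mem_def, Option.some.injEq, head?_cons, forall_eq']
          obtain ⟨a1, a2⟩ := a
          obtain ⟨b1, b2⟩ := b
          rintro rfl
          cases a2 <;> cases b2 <;> simp_all
        simp [hred.reduce_eq, invRev_length]

/-- The Gromov product `(x | y)₁` in the Cayley tree of `FreeGroup γ`. -/
def gromovProduct (x y : FreeGroup γ) : ℕ :=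
  x.toWord.commonPrefixLength y.toWord

theorem norm_inv_mul_add_two_mul_gromovProduct (x y : FreeGroup γ) :
    (x⁻¹ * y).norm + 2 * gromovProduct x y = x.norm + y.norm := by
  have hxy : x⁻¹ * y = mk (invRev x.toWord ++ y.toWord) := by
    rw [← mul_mk, ← inv_mk, mk_toWord, mk_toWord]
  rw [hxy, norm, toWord_mk]
  exact length_reduce_invRev_append isReduced_toWord isReduced_toWord

theorem gromovProduct_le_norm_left (x y : FreeGroup γ) : gromovProduct x y ≤ x.norm :=
  commonPrefixLength_le_length_left _ _

theorem gromovProduct_le_norm_right (x y : FreeGroup γ) : gromovProduct x y ≤ y.norm := by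
  rw [gromovProduct, commonPrefixLength_comm]
  exact commonPrefixLength_le_length_left _ _

theorem gromovProduct_comm (x y : FreeGroup γ) : gromovProduct x y = gromovProduct y x :=
  commonPrefixLength_comm _ _

@[simp]
theorem gromovProduct_self (x : FreeGroup γ) : gromovProduct x x = x.norm :=
  commonPrefixLength_self _

@[simp]
theorem gromovProduct_one_left (x : FreeGroup γ) : gromovProduct 1 x = 0 := by
  simp [gromovProduct]

theorem min_gromovProduct_le (x y z : FreeGroup γ) :
    min (gromovProduct x y) (gromovProduct y z) ≤ gromovProduct x z :=
  min_commonPrefixLength_le _ _ _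

theorem norm_inv_mul_comm (x y : FreeGroup γ) : (x⁻¹ * y).norm = (y⁻¹ * x).norm := by
  rw [← norm_inv_eq, mul_inv_rev, inv_inv]

/-- `{g | c ≤ (g | b)₁}` is the branch of the tree beyond the point at distance `c` from `1` on
the geodesic to `b`, and a path from `x` out of it passes through that point. -/
theorem norm_lt_of_le_gromovProduct_of_gromovProduct_lt {x y b : FreeGroup γ} {c : ℕ}
    (hx : c ≤ gromovProduct x b) (hy : gromovProduct y b < c) :
    x.norm < (x⁻¹ * y).norm + c := by
  have hxy : gromovProduct x y < c := by
    have := min_gromovProduct_le y x b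
    rw [gromovProduct_comm y x] at this
    omega
  have := norm_inv_mul_add_two_mul_gromovProduct x y
  have := gromovProduct_le_norm_right x y
  omega

theorem norm_map_le_mul (f : FreeGroup γ →* FreeGroup δ) {L : ℕ}
    (hf : ∀ a, (f (of a)).norm ≤ L) (g : FreeGroup γ) : (f g).norm ≤ L * g.norm := by
  have hletter : ∀ c : γ × Bool, (f (mk [c])).norm ≤ L := by
    rintro ⟨a, _ | _⟩
    · have : mk [(a, false)] = (of a)⁻¹ := by rw [of, inv_mk]; rfl
      rw [this, _root_.map_inv, norm_inv_eq]
      exact hf a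
    · exact hf a
  suffices hword : ∀ l : List (γ × Bool), (f (mk l)).norm ≤ L * l.length by
    have := hword g.toWord
    rw [mk_toWord] at this
    exact this
  intro l
  induction l with
  | nil => simp [← one_eq_mk]
  | cons c l ih =>
    calc (f (mk (c :: l))).norm = (f (mk [c]) * f (mk l)).norm := by
          rw [← _root_.map_mul, mul_mk]; rfl
      _ ≤ L + L * l.length := (norm_mul_le _ _).trans (Nat.add_le_add (hletter c) ih)
      _ = L * (c :: l).length := by rw [length_cons]; ring

/-- A Morse lemma for trees: `(q 0 | q N)₁` is the distance from `1` to the geodesic between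
`q 0` and `q N`, and a bi-Lipschitz path through `1` stays close to that geodesic. -/
theorem gromovProduct_le_of_quasigeodesic (q : ℕ → FreeGroup γ) {L L' n N : ℕ}
    (hnN : n ≤ N) (hn : q n = 1)
    (hupper : ∀ i d, i + d ≤ N → ((q i)⁻¹ * q (i + d)).norm ≤ L * d)
    (hlower : ∀ i d, i + d ≤ N → d ≤ L' * ((q i)⁻¹ * q (i + d)).norm) :
    gromovProduct (q 0) (q N) ≤ 2 * L * L * L' := by
  set c := gromovProduct (q 0) (q N)
  rcases Nat.eq_zero_or_pos c with hc | hc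
  · simp [hc]
  let inBranch := fun j => c ≤ gromovProduct (q j) (q N)
  have hbranch_n : ¬ inBranch n := by simp [inBranch, hn, hc.ne']
  have hbranch_N : inBranch N := by
    simpa [inBranch] using gromovProduct_le_norm_right (q 0) (q N)
  -- The path leaves the branch after time `i` and re-enters it at time `k + 1`, both times within
  -- `L` of its root; so `k + 1 - i` is short, and so is the stretch from `q i` to `q n = 1`.
  obtain ⟨i, -, hin, hi, hi1⟩ :=
    Nat.exists_le_lt_and_not_succ inBranch (Nat.zero_le n) le_rfl hbranch_n
  obtain ⟨k, hnk, hkN, hk, hk1⟩ :=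
    Nat.exists_le_lt_and_not_succ (fun j => ¬ inBranch j) hnN hbranch_n (not_not.2 hbranch_N)
  rw [not_not] at hk1
  have hi_exit := norm_lt_of_le_gromovProduct_of_gromovProduct_lt hi (not_le.1 hi1)
  have hk_exit := norm_lt_of_le_gromovProduct_of_gromovProduct_lt hk1 (not_le.1 hk)
  have hstep_i := hupper i 1 (by omega)
  have hstep_k := hupper k 1 (by omega)
  rw [norm_inv_mul_comm] at hstep_k
  have hik : ((q i)⁻¹ * q (k + 1)).norm < 2 * L := by
    have := norm_inv_mul_add_two_mul_gromovProduct (q i) (q (k + 1))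
    have := min_gromovProduct_le (q i) (q N) (q (k + 1))
    rw [gromovProduct_comm (q N)] at this
    omega
  have hik_lower := hlower i (k + 1 - i) (by omega)
  rw [Nat.add_sub_cancel' (by omega : i ≤ k + 1)] at hik_lower
  have hi_norm := hupper i (n - i) (by omega)
  rw [Nat.add_sub_cancel' hin.le, hn, mul_one, norm_inv_eq] at hi_norm
  calc c ≤ (q i).norm := hi.trans (gromovProduct_le_norm_left _ _)
    _ ≤ L * (n - i) := hi_norm
    _ ≤ L * (L' * (2 * L)) := by
      gcongr
      calc n - i ≤ k + 1 - i := by omega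
        _ ≤ L' * ((q i)⁻¹ * q (k + 1)).norm := hik_lower
        _ ≤ L' * (2 * L) := Nat.mul_le_mul_left _ hik.le
    _ = 2 * L * L * L' := by ring

theorem norm_add_norm_le_of_norm_add_norm_eq (f : FreeGroup γ ≃* FreeGroup δ) {L L' : ℕ}
    (hf : ∀ a, (f (of a)).norm ≤ L) (hf' : ∀ b, (f.symm (of b)).norm ≤ L')
    {w w' : FreeGroup γ} (hww' : w.norm + w'.norm = (w * w').norm) :
    (f w).norm + (f w').norm ≤ (f (w * w')).norm + 2 * (2 * L * L * L') := by
  set W := w.toWord ++ w'.toWord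
  have hW : (w * w').toWord = W :=
    (toWord_mul_sublist w w').eq_of_length (by simp only [length_append]; exact hww'.symm)
  have hWred : IsReduced W := hW ▸ isReduced_toWord
  have hmkW : mk W = w * w' := by rw [← mul_mk, mk_toWord, mk_toWord]
  let q j := f (w⁻¹ * mk (W.take j))
  have hseg (i d : ℕ) : (q i)⁻¹ * q (i + d) = f (mk ((W.drop i).take d)) := by
    simp only [q, ← _root_.map_inv, ← _root_.map_mul, take_add, ← mul_mk]
    group
  have hseg_norm (i d : ℕ) (h : i + d ≤ W.length) : (mk ((W.drop i).take d)).norm = d := by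
    have hinfix : (W.drop i).take d <:+: W :=
      (take_prefix _ _).isInfix.trans (drop_suffix _ _).isInfix
    rw [norm, toWord_mk, (hWred.infix hinfix).reduce_eq, length_take, length_drop]
    omega
  have hgromov := gromovProduct_le_of_quasigeodesic q (n := w.toWord.length) (N := W.length)
    (by simp [W]) (by simp [q, W, mk_toWord])
    (fun i d h => hseg i d ▸ hseg_norm i d h ▸ norm_map_le_mul f.toMonoidHom hf _)
    (fun i d h => calc
      d = (f.symm (f (mk ((W.drop i).take d)))).norm := by
        rw [f.symm_apply_apply, hseg_norm i d h]
      _ ≤ L' * (f (mk ((W.drop i).take d))).norm := norm_map_le_mul f.symm.toMonoidHom hf' _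
      _ = L' * ((q i)⁻¹ * q (i + d)).norm := by rw [hseg])
  have hq0 : q 0 = (f w)⁻¹ := by simp [q, ← one_eq_mk]
  have hqN : q W.length = f w' := by simp only [q, take_length, hmkW]; group
  have := norm_inv_mul_add_two_mul_gromovProduct (f w)⁻¹ (f w')
  rw [inv_inv, norm_inv_eq] at this
  rw [hq0, hqN] at hgromov
  rw [_root_.map_mul]
  omega

theorem exists_norm_add_norm_le_of_norm_add_norm_eq [Fintype γ] [Fintype δ]
    (f : FreeGroup γ ≃* FreeGroup δ) :
    ∃ C, ∀ w w' : FreeGroup γ, w.norm + w'.norm = (w * w').norm →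
      (f w).norm + (f w').norm ≤ (f (w * w')).norm + 2 * C :=
  ⟨_, fun _ _ => norm_add_norm_le_of_norm_add_norm_eq f
    (fun a => Finset.le_sup (f := fun a => (f (of a)).norm) (Finset.mem_univ a))
    (fun b => Finset.le_sup (f := fun b => (f.symm (of b)).norm) (Finset.mem_univ b))⟩

theorem norm_sq_of_isCyclicallyReduced {w : FreeGroup γ} (h : IsCyclicallyReduced w.toWord) :
    (w ^ 2).norm = 2 * w.norm := by
  rw [norm, toWord_pow, (h.flatten_replicate 2).isReduced.reduce_eq]
  simp only [replicate_succ, replicate_zero, flatten_cons, flatten_nil, append_nil, length_append,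
    norm]
  omega

theorem norm_sq_add_two_mul_length_conjugator (v : FreeGroup γ) :
    (v ^ 2).norm + 2 * (reduceCyclically.conjugator v.toWord).length = 2 * v.norm := by
  have hv := congrArg length (reduceCyclically.conj_conjugator_reduceCyclically v.toWord)
  rw [norm, toWord_pow, reduceCyclically.reduce_flatten_replicate_succ isReduced_toWord 1]
  simp only [replicate_succ, replicate_zero, flatten_cons, flatten_nil, append_nil,
    length_append, invRev_length, norm] at hv ⊢
  omega

theorem cyclRedWord_iff_isCyclicallyReduced {α : Type} {L : List (α × Bool)} (hL : IsReduced L) :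
    CyclRedWord L ↔ IsCyclicallyReduced L := by
  simp only [CyclRedWord, IsCyclicallyReduced, hL, true_and, Option.mem_def]
  constructor
  · intro h a ha b hb hab
    by_contra hne
    exact h b a hb ha ⟨hab, Bool.eq_not_of_ne hne⟩
  · rintro h p q hp hq ⟨hqp, hq2⟩
    exact Bool.not_ne_self p.2 (hq2 ▸ h q hq p hp hqp)

end FreeGroup

open FreeGroup

theorem lenB_add_lenB_le_of_norm_add_norm_eq {α β : Type} [Fintype α] [Fintype β] [DecidableEq α]
    [DecidableEq β] (e : FreeGroup β ≃* FreeGroup α) {w w' : FreeGroup α}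
    (h : w.norm + w'.norm = (w * w').norm) :
    lenB e w + lenB e w' ≤ lenB e (w * w') + 2 * BCC e := by
  obtain ⟨C, hC⟩ := exists_norm_add_norm_le_of_norm_add_norm_eq e.symm
  have hBCC : BCC e ∈ {C : ℕ | ∀ w w' : FreeGroup α, w.norm + w'.norm = (w * w').norm →
      lenB e w + lenB e w' ≤ lenB e (w * w') + 2 * C} := Nat.sInf_mem ⟨C, hC⟩
  exact hBCC w w' h

/-- A word that is cyclically reduced with respect to `𝒜` is, with respect to another
basis `ℬ`, conjugate to a `ℬ`-cyclically reduced word by an element of `ℬ`-length at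
most `BCC(𝒜,ℬ)`. -/
theorem stmt7 {α β : Type} [Fintype α] [Fintype β] [DecidableEq α] [DecidableEq β]
    (e : FreeGroup β ≃* FreeGroup α) (w : FreeGroup α)
    (hw : CyclRedWord (FreeGroup.toWord w)) :
    ∃ z x : FreeGroup α, w = z * x * z⁻¹ ∧
      CyclRedWord (FreeGroup.toWord (e.symm x)) ∧ lenB e z ≤ BCC e := by
  have hsq := norm_sq_add_two_mul_length_conjugator (e.symm w)
  set V := (e.symm w).toWord
  set Z := reduceCyclically.conjugator V
  have hX := reduceCyclically.isCyclicallyReduced (isReduced_toWord (x := e.symm w))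
  refine ⟨e (mk Z), e (mk (reduceCyclically V)), ?_, ?_, ?_⟩
  · rw [← _root_.map_inv, ← _root_.map_mul, ← _root_.map_mul, inv_mk, mul_mk, mul_mk,
      reduceCyclically.conj_conjugator_reduceCyclically, mk_toWord, e.apply_symm_apply]
  · rw [e.symm_apply_apply, toWord_mk, hX.isReduced.reduce_eq,
      cyclRedWord_iff_isCyclicallyReduced hX.isReduced]
    exact hX
  · have hww : w.norm + w.norm = (w * w).norm := by
      rw [← pow_two, norm_sq_of_isCyclicallyReduced
        ((cyclRedWord_iff_isCyclicallyReduced isReduced_toWord).1 hw)]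
      ring
    have hBCC := lenB_add_lenB_le_of_norm_add_norm_eq e hww
    calc lenB e (e (mk Z)) = (mk Z).norm := by rw [lenB, e.symm_apply_apply]; rfl
      _ ≤ Z.length := norm_mk_le
      _ ≤ BCC e := by
        unfold lenB at hBCC
        rw [_root_.map_mul, ← pow_two] at hBCC
        unfold FreeGroup.norm at hsq
        omega
end

section
/- Let F be a free group with bases 𝒜 and ℬ and fix a ∈ 𝒜. Then there exists a constant C ≥ 0 such that whenever w, w', and ww' are all reduced words in ℬ and ww' is cyclically reduced in ℬ, we have o(a^{±1}, w)_𝒜 + o(a^{±1}, w')_𝒜 ≤ ⟨a^{±1}, ww'⟩_𝒜 + C. -/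
/-- `o(a^{±1}, w)_𝒜`: the number of occurrences of the letter `a` or `a⁻¹` in the
reduced `𝒜`-word of `w`. -/
def countA {α : Type} [DecidableEq α] (a : α) (w : FreeGroup α) : ℕ :=
  ((FreeGroup.toWord w).filter (fun p => p.1 = a)).length

/-- `⟨a^{±1}, w⟩_𝒜`: the number of occurrences of `a` or `a⁻¹` in the cyclic word
determined by `w` (the minimum of the letter count over all conjugates). -/
noncomputable def cyclCountA {α : Type} [DecidableEq α] (a : α) (w : FreeGroup α) : ℕ :=
  sInf {k : ℕ | ∃ z : FreeGroup α, k = countA a (z * w * z⁻¹)}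

open List

theorem Nat.exists_lt_and_not_succ {P : ℕ → Prop} {k : ℕ} (h₀ : P 0) (hk : ¬ P k) :
    ∃ i < k, P i ∧ ¬ P (i + 1) := by
  induction k with
  | zero => exact absurd h₀ hk
  | succ k ih =>
    by_cases hPk : P k
    · exact ⟨k, k.lt_succ_self, hPk, hk⟩
    · obtain ⟨i, hi, hPi⟩ := ih hPk
      exact ⟨i, hi.trans k.lt_succ_self, hPi⟩

namespace FreeGroup

variable {α β : Type}

theorem getLast?_invRev_cons (c : α × Bool) (L : List (α × Bool)) :
    (invRev (c :: L)).getLast? = some (c.1, !c.2) := by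
  simp [invRev]

theorem IsReduced.head?_ne {L₁ L₂ : List (α × Bool)} {c : α × Bool} (h : IsReduced (L₁ ++ L₂))
    (hlast : L₁.getLast? = some (c.1, !c.2)) : L₂.head? ≠ some c := fun hhead => by
  simpa using (isChain_append.mp h).2.2 _ hlast _ hhead

theorem IsReduced.isCyclicallyReduced_of_cyclRedWord {L : List (α × Bool)} (hL : IsReduced L)
    (h : CyclRedWord L) : IsCyclicallyReduced L := by
  refine ⟨hL, fun q hq p hp hqp => ?_⟩
  by_contra hne
  exact h p q hp hq ⟨hqp, Bool.eq_not_iff.mpr hne⟩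

theorem inv_mk_take_mul_mk_take (W : List (α × Bool)) {i j : ℕ} (hij : i ≤ j) :
    (mk (W.take i))⁻¹ * mk (W.take j) = mk ((W.take j).drop i) := by
  rw [inv_mul_eq_iff_eq_mul, mul_mk]
  conv_lhs => rw [← take_append_drop i (W.take j), take_take, min_eq_left hij]

variable [DecidableEq α] [DecidableEq β]

theorem isReduced_invRev_iff {L : List (α × Bool)} : IsReduced (invRev L) ↔ IsReduced L := by
  rw [isReduced_iff_reduce_eq, isReduced_iff_reduce_eq, reduce_invRev, invRev_injective.eq_iff]

theorem toWord_mk_of_isReduced {L : List (α × Bool)} (h : IsReduced L) : toWord (mk L) = L := by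
  rw [toWord_mk, h.reduce_eq]

theorem exists_append_eq_of_isReduced {L₁ L₂ : List (α × Bool)} (h₁ : IsReduced L₁)
    (h₂ : IsReduced L₂) :
    ∃ x s y, L₁ = x ++ s ∧ L₂ = invRev s ++ y ∧ IsReduced (x ++ y) := by
  induction L₁ using List.reverseRecOn generalizing L₂ with
  | nil => exact ⟨[], [], L₂, rfl, rfl, h₂⟩
  | append_singleton L ℓ ih =>
    cases L₂ with
    | nil => exact ⟨L ++ [ℓ], [], [], by simp, rfl, by simpa using h₁⟩
    | cons b t =>
      by_cases hjoin : ℓ.1 = b.1 → ℓ.2 = b.2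
      · refine ⟨L ++ [ℓ], [], b :: t, by simp, rfl, isChain_append.mpr ⟨h₁, h₂, ?_⟩⟩
        simpa using hjoin
      · obtain ⟨x, s, y, hL, ht, hxy⟩ :=
          ih (h₁.infix (prefix_append L [ℓ]).isInfix) (h₂.infix (suffix_cons b t).isInfix)
        obtain ⟨h₁, h₂⟩ := Classical.not_imp.mp hjoin
        have hb : b = (ℓ.1, !ℓ.2) := Prod.ext h₁.symm (Bool.eq_not_iff.mpr (Ne.symm h₂))
        refine ⟨x, s ++ [ℓ], y, by simp [hL], ?_, hxy⟩
        simp [hb, ht, invRev]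

theorem exists_toWord_mul_eq (p q : FreeGroup α) :
    ∃ x s y, toWord p = x ++ s ∧ toWord q = invRev s ++ y ∧ toWord (p * q) = x ++ y := by
  obtain ⟨x, s, y, hx, hy, hxy⟩ := exists_append_eq_of_isReduced (isReduced_toWord (x := p))
    (isReduced_toWord (x := q))
  have hp : p = mk x * mk s := by rw [mul_mk, ← hx, mk_toWord]
  have hq : q = (mk s)⁻¹ * mk y := by rw [inv_mk, mul_mk, ← hy, mk_toWord]
  refine ⟨x, s, y, hx, hy, ?_⟩
  rw [hp, hq, mul_assoc, mul_inv_cancel_left, mul_mk, toWord_mk_of_isReduced hxy]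

theorem norm_le_norm_inv_mul {z₁ z₂ : FreeGroup α} {c : α × Bool}
    (h₁ : (toWord z₁).head? ≠ some c) (h₂ : (toWord z₂).head? = some c) :
    norm z₂ ≤ norm (z₁⁻¹ * z₂) := by
  have hred : IsReduced (invRev (toWord z₁) ++ toWord z₂) := by
    refine isChain_append.mpr
      ⟨isReduced_invRev_iff.mpr isReduced_toWord, isReduced_toWord, ?_⟩
    rcases hz : toWord z₁ with _ | ⟨μ, t⟩
    · simp [invRev]
    · rw [hz] at h₁
      rw [getLast?_invRev_cons, h₂]
      obtain ⟨μ₁, μ₂⟩ := μ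
      obtain ⟨c₁, c₂⟩ := c
      rintro _ ⟨⟩ _ ⟨⟩ (rfl : μ₁ = c₁)
      cases μ₂ <;> cases c₂ <;> simp_all
  rw [norm, norm, toWord_mul, toWord_inv, hred.reduce_eq, length_append]
  omega

theorem norm_inv_mul_le (z₁ z₂ : FreeGroup α) : norm (z₁⁻¹ * z₂) ≤ norm z₁ + norm z₂ :=
  (norm_mul_le _ _).trans_eq (by rw [norm_inv_eq])

theorem norm_inv_mul_le_of_step {h : ℕ → FreeGroup α} {M : ℕ}
    (hstep : ∀ m, norm ((h m)⁻¹ * h (m + 1)) ≤ M) {i j : ℕ} (hij : i ≤ j) :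
    norm ((h i)⁻¹ * h j) ≤ M * (j - i) := by
  induction j, hij using Nat.le_induction with
  | base => simp [norm_one]
  | succ j hij ih =>
    calc norm ((h i)⁻¹ * h (j + 1)) = norm ((h i)⁻¹ * h j * ((h j)⁻¹ * h (j + 1))) := by group
      _ ≤ M * (j - i) + M := (norm_mul_le _ _).trans (add_le_add ih (hstep j))
      _ = M * (j + 1 - i) := by rw [Nat.sub_add_comm hij, mul_add_one]

/-- The path enters and leaves the set of words beginning with `c` through points of norm at most
`M` (`norm_le_norm_inv_mul`), and by `hlower` it spends at most `2KM` steps between them. -/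
theorem norm_le_of_head?_eq {h : ℕ → FreeGroup α} {c : α × Bool} {M K k n : ℕ}
    (hstep : ∀ m, norm ((h m)⁻¹ * h (m + 1)) ≤ M)
    (hlower : ∀ i j, i ≤ j → j ≤ n → j - i ≤ K * norm ((h i)⁻¹ * h j))
    (h₀ : (toWord (h 0)).head? ≠ some c) (hn : (toWord (h n)).head? ≠ some c)
    (hk : (toWord (h k)).head? = some c) (hkn : k ≤ n) :
    norm (h k) ≤ M + M * (K * (M + M)) := by
  obtain ⟨i, hik, hi, hi'⟩ :=
    Nat.exists_lt_and_not_succ (P := fun m => (toWord (h m)).head? ≠ some c) h₀ (not_not.2 hk)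
  obtain ⟨d, hd, hd', hd''⟩ :=
    Nat.exists_lt_and_not_succ (P := fun d => (toWord (h (k + d))).head? = some c) (k := n - k)
      hk (by rwa [Nat.add_sub_cancel' hkn])
  have hentry : norm (h (i + 1)) ≤ M :=
    (norm_le_norm_inv_mul hi (not_not.1 hi')).trans (hstep i)
  have hexit : norm (h (k + d)) ≤ M :=
    calc norm (h (k + d)) ≤ norm ((h (k + d + 1))⁻¹ * h (k + d)) := norm_le_norm_inv_mul hd'' hd'
      _ = norm ((h (k + d))⁻¹ * h (k + d + 1)) := by rw [← norm_inv_eq, mul_inv_rev, inv_inv]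
      _ ≤ M := hstep _
  have hgap : k + d - (i + 1) ≤ K * (M + M) :=
    (hlower _ _ (by omega) (by omega)).trans
      (Nat.mul_le_mul_left K ((norm_inv_mul_le _ _).trans (add_le_add hentry hexit)))
  calc norm (h k) = norm (h (i + 1) * ((h (i + 1))⁻¹ * h k)) := by rw [mul_inv_cancel_left]
    _ ≤ M + M * (k - (i + 1)) :=
      (norm_mul_le _ _).trans (add_le_add hentry (norm_inv_mul_le_of_step hstep hik))
    _ ≤ M + M * (K * (M + M)) := by gcongr; omega

/-- Bounded cancellation: translated by `x⁻¹`, the images of the prefixes of the reduced word of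
`u * v` form a path from `x⁻¹` through `s` to `y`, to which `norm_le_of_head?_eq` applies. -/
theorem length_cancel_le (f : FreeGroup β →* FreeGroup α) {M K : ℕ}
    (hM : ∀ z, norm (f z) ≤ M * norm z) (hK : ∀ z, norm z ≤ K * norm (f z))
    {u v : FreeGroup β} (huv : toWord (u * v) = toWord u ++ toWord v)
    {x s y : List (α × Bool)} (hx : toWord (f u) = x ++ s) (hy : toWord (f v) = invRev s ++ y)
    (hxy : toWord (f u * f v) = x ++ y) : s.length ≤ M + M * (K * (M + M)) := by
  obtain _ | ⟨c, s'⟩ := s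
  · simp
  set W := toWord (u * v)
  set h : ℕ → FreeGroup α := fun m => (mk x)⁻¹ * f (mk (W.take m))
  have hdiff {i j : ℕ} (hij : i ≤ j) : (h i)⁻¹ * h j = f (mk ((W.take j).drop i)) := by
    rw [← inv_mk_take_mul_mk_take W hij, _root_.map_mul, _root_.map_inv]
    simp only [h]
    group
  have hslice {i j : ℕ} (hij : i ≤ j) (hjn : j ≤ W.length) :
      norm (mk ((W.take j).drop i)) = j - i := by
    have hred : IsReduced ((W.take j).drop i) := isReduced_toWord.infix
      (((W.take j).drop_suffix i).isInfix.trans (W.take_prefix j).isInfix)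
    rw [norm, toWord_mk_of_isReduced hred, length_drop, length_take, min_eq_left hjn]
  have hstep (m : ℕ) : norm ((h m)⁻¹ * h (m + 1)) ≤ M := by
    rw [hdiff m.le_succ]
    refine (hM _).trans ((Nat.mul_le_mul_left M (norm_mk_le.trans ?_)).trans_eq (mul_one M))
    simp only [length_drop, length_take]
    omega
  have hlower (i j : ℕ) (hij : i ≤ j) (hjn : j ≤ W.length) :
      j - i ≤ K * norm ((h i)⁻¹ * h j) := by
    exact hslice hij hjn ▸ hdiff hij ▸ hK _
  have hxs : IsReduced (x ++ c :: s') := hx ▸ isReduced_toWord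
  have hxs' : IsReduced (invRev (c :: s') ++ invRev x) :=
    invRev_append ▸ isReduced_invRev_iff.mpr hxs
  have h₀ : toWord (h 0) = invRev x := by
    simp only [h, take_zero, ← one_eq_mk, _root_.map_one, mul_one, inv_mk]
    exact toWord_mk_of_isReduced (isReduced_invRev_iff.mpr (hxs.infix (prefix_append _ _).isInfix))
  have hk : toWord (h (toWord u).length) = c :: s' := by
    simp only [h, W, huv, take_left, mk_toWord]
    rw [← mk_toWord (x := f u), hx, ← mul_mk, inv_mul_cancel_left]
    exact toWord_mk_of_isReduced (hxs.infix (suffix_append _ _).isInfix)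
  have hn : toWord (h W.length) = y := by
    simp only [h, take_length, W, mk_toWord, _root_.map_mul]
    rw [← mk_toWord (x := f u * f v), hxy, ← mul_mk, inv_mul_cancel_left]
    exact toWord_mk_of_isReduced ((hxy ▸ isReduced_toWord).infix (suffix_append _ _).isInfix)
  have hlen := norm_le_of_head?_eq hstep hlower
    (by rw [h₀]; exact hxs'.head?_ne (getLast?_invRev_cons c s'))
    (by rw [hn]; exact (hy ▸ isReduced_toWord).head?_ne (getLast?_invRev_cons c s'))
    (by rw [hk]; rfl) (by simp [W, huv])
  rwa [norm, hk] at hlen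

theorem exists_norm_map_le [Finite β] (f : FreeGroup β →* FreeGroup α) :
    ∃ M, ∀ z, norm (f z) ≤ M * norm z := by
  obtain ⟨M, hM⟩ := Finite.bddAbove_range fun b => norm (f (of b))
  have hletter (p : β × Bool) : norm (f (mk [p])) ≤ M := by
    obtain ⟨b, _ | _⟩ := p
    · rw [show mk [(b, false)] = (of b)⁻¹ by rw [of, inv_mk]; rfl, _root_.map_inv, norm_inv_eq]
      exact hM ⟨b, rfl⟩
    · exact hM ⟨b, rfl⟩
  have hword (L : List (β × Bool)) : norm (f (mk L)) ≤ M * L.length := by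
    induction L with
    | nil => simp [← one_eq_mk]
    | cons p L ih =>
      rw [← singleton_append, ← mul_mk, _root_.map_mul, length_append, length_singleton,
        mul_add, mul_one]
      exact (norm_mul_le _ _).trans (add_le_add (hletter p) ih)
  refine ⟨M, fun z => ?_⟩
  have := hword (toWord z)
  rwa [mk_toWord] at this

theorem bounded_cancellation [Finite α] [Finite β] (e : FreeGroup β ≃* FreeGroup α) :
    ∃ C, ∀ u v, norm u + norm v = norm (u * v) →
      norm (e u) + norm (e v) ≤ norm (e u * e v) + 2 * C := by
  obtain ⟨M, hM⟩ := exists_norm_map_le e.toMonoidHom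
  obtain ⟨K, hK⟩ := exists_norm_map_le e.symm.toMonoidHom
  refine ⟨M + M * (K * (M + M)), fun u v huv => ?_⟩
  have huv' : toWord (u * v) = toWord u ++ toWord v :=
    (toWord_mul_sublist u v).eq_of_length (by rw [length_append]; exact huv.symm)
  obtain ⟨x, s, y, hx, hy, hxy⟩ := exists_toWord_mul_eq (e u) (e v)
  have hs := length_cancel_le e.toMonoidHom hM (fun z => by simpa using hK (e z)) huv' hx hy hxy
  simp only [norm, hx, hy, hxy, length_append, invRev_length]
  omega

theorem norm_mul_self_of_isCyclicallyReduced {u : FreeGroup α}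
    (h : IsCyclicallyReduced (toWord u)) : norm (u * u) = norm u + norm u := by
  have h₂ := (h.flatten_replicate 2).isReduced
  simp only [replicate_succ, replicate_zero, flatten_cons, flatten_nil, append_nil] at h₂
  rw [norm, toWord_mul, h₂.reduce_eq, length_append, norm]

open reduceCyclically in
theorem exists_toWord_eq_conj_isCyclicallyReduced (g : FreeGroup α) :
    ∃ s c : FreeGroup α, g = s * c * s⁻¹ ∧ IsCyclicallyReduced (toWord c) ∧
      toWord g = toWord s ++ toWord c ++ invRev (toWord s) := by
  have hL : IsReduced (toWord g) := isReduced_toWord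
  set L := toWord g
  have hg := conj_conjugator_reduceCyclically L
  have hred : IsReduced (conjugator L ++ reduceCyclically L ++ invRev (conjugator L)) := by
    rwa [hg]
  have hs := toWord_mk_of_isReduced
    (hred.infix ((prefix_append _ _).trans (prefix_append _ _)).isInfix)
  have hc := toWord_mk_of_isReduced (hred.infix ⟨conjugator L, _, rfl⟩)
  refine ⟨mk (conjugator L), mk (reduceCyclically L), ?_, ?_, by rw [hs, hc, hg]⟩
  · rw [inv_mk, mul_mk, mul_mk, hg, mk_toWord]
  · rw [hc]
    exact isCyclicallyReduced hL

end FreeGroup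

open FreeGroup

section countA

variable {α : Type} [DecidableEq α] (a : α)

theorem countA_eq_countP (w : FreeGroup α) :
    countA a w = (toWord w).countP (fun p => p.1 = a) :=
  (countP_eq_length_filter ..).symm

theorem countA_mul_le (x y : FreeGroup α) : countA a (x * y) ≤ countA a x + countA a y := by
  simpa only [countA_eq_countP, countP_append] using
    (toWord_mul_sublist x y).countP_le (p := fun p => p.1 = a)

/-- The letters other than `a±1` are subadditive too, so cancellation removes at least as many
letters as letters `a±1`. -/
theorem countA_add_countA_add_norm_mul_le (x y : FreeGroup α) :
    countA a x + countA a y + (x * y).norm ≤ countA a (x * y) + x.norm + y.norm := by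
  have hother := (toWord_mul_sublist x y).countP_le (p := fun p => ¬ p.1 = a)
  rw [countP_append] at hother
  simp only [countA_eq_countP, FreeGroup.norm,
    length_eq_countP_add_countP (fun p : α × Bool => decide (p.1 = a)), decide_eq_true_eq]
  omega

theorem countA_inv (x : FreeGroup α) : countA a x⁻¹ = countA a x := by
  simp [countA_eq_countP, toWord_inv, invRev, countP_map, Function.comp_def]

theorem countA_pow_le (x : FreeGroup α) (n : ℕ) : countA a (x ^ n) ≤ n * countA a x := by
  induction n with
  | zero => simp [countA]
  | succ n ih =>
    rw [pow_succ, add_one_mul]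
    exact (countA_mul_le a _ _).trans (Nat.add_le_add_right ih _)

theorem countA_pow_of_isCyclicallyReduced {c : FreeGroup α} (hc : IsCyclicallyReduced (toWord c))
    (n : ℕ) : countA a (c ^ n) = n * countA a c := by
  rw [countA_eq_countP, countA_eq_countP, toWord_pow,
    (hc.flatten_replicate n).isReduced.reduce_eq, countP_flatten, map_replicate, sum_replicate,
    smul_eq_mul]

/-- `c ^ n` has exactly `n * countA a c` letters `a±1`, while its conjugate `(y * c * y⁻¹) ^ n` has
at most `n * countA a (y * c * y⁻¹)`; let `n` grow. -/
theorem countA_le_countA_conj {c : FreeGroup α} (hc : IsCyclicallyReduced (toWord c))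
    (y : FreeGroup α) : countA a c ≤ countA a (y * c * y⁻¹) := by
  have key (n : ℕ) : n * countA a c ≤ 2 * countA a y + n * countA a (y * c * y⁻¹) := by
    have hpow : c ^ n = y⁻¹ * (y * c * y⁻¹) ^ n * y := by rw [conj_pow]; group
    rw [← countA_pow_of_isCyclicallyReduced a hc, hpow]
    calc countA a (y⁻¹ * (y * c * y⁻¹) ^ n * y)
        ≤ countA a y⁻¹ + countA a ((y * c * y⁻¹) ^ n) + countA a y :=
          (countA_mul_le a _ _).trans (Nat.add_le_add_right (countA_mul_le a _ _) _)
      _ ≤ 2 * countA a y + n * countA a (y * c * y⁻¹) := by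
          rw [countA_inv]; linarith [countA_pow_le a (y * c * y⁻¹) n]
  by_contra! hlt
  nlinarith [key (2 * countA a y + 1)]

theorem countA_le_cyclCountA {c : FreeGroup α} (hc : IsCyclicallyReduced (toWord c))
    (s : FreeGroup α) : countA a c ≤ cyclCountA a (s * c * s⁻¹) := by
  refine le_csInf ⟨_, 1, rfl⟩ ?_
  rintro _ ⟨z, rfl⟩
  rw [show z * (s * c * s⁻¹) * z⁻¹ = z * s * c * (z * s)⁻¹ by group]
  exact countA_le_countA_conj a hc _

/-- With `g = s * c * s⁻¹` the cyclic reduction, `g * g` cancels `2 * s.norm` letters, so the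
hypothesis gives `s.norm ≤ D`. -/
theorem countA_le_cyclCountA_add {g : FreeGroup α} {D : ℕ}
    (hg : g.norm + g.norm ≤ (g * g).norm + 2 * D) : countA a g ≤ cyclCountA a g + 2 * D := by
  obtain ⟨s, c, rfl, hc, hword⟩ := exists_toWord_eq_conj_isCyclicallyReduced g
  have hnorm : (s * c * s⁻¹).norm = 2 * s.norm + c.norm := by
    simp only [FreeGroup.norm, hword, length_append, invRev_length]; ring
  have hsq : (s * c * s⁻¹ * (s * c * s⁻¹)).norm ≤ 2 * s.norm + 2 * c.norm := by
    rw [show s * c * s⁻¹ * (s * c * s⁻¹) = s * c * c * s⁻¹ by group]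
    have := norm_mul_le (s * c * c) s⁻¹
    have := norm_mul_le (s * c) c
    have := norm_mul_le s c
    rw [norm_inv_eq] at *
    omega
  have hcount : countA a (s * c * s⁻¹) ≤ countA a c + 2 * s.norm := by
    have h₁ := countP_le_length (p := fun p => decide (p.1 = a)) (l := toWord s)
    have h₂ := countP_le_length (p := fun p => decide (p.1 = a)) (l := invRev (toWord s))
    rw [invRev_length] at h₂
    rw [countA_eq_countP, countA_eq_countP, hword, countP_append, countP_append, FreeGroup.norm]
    omega
  have := countA_le_cyclCountA a hc s
  omega

end countA

/-- There is `C ≥ 0` such that whenever the `ℬ`-words of `w`, `w'` concatenate without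
cancellation and `w w'` is cyclically reduced in `ℬ`, the `𝒜`-letter counts satisfy
`o(a^{±1}, w)_𝒜 + o(a^{±1}, w')_𝒜 ≤ ⟨a^{±1}, w w'⟩_𝒜 + C`. -/
theorem stmt8 {α β : Type} [Fintype α] [Fintype β] [DecidableEq α] [DecidableEq β]
    (e : FreeGroup β ≃* FreeGroup α) (a : α) :
    ∃ C : ℕ, ∀ w w' : FreeGroup α,
      (FreeGroup.toWord (e.symm w)).length + (FreeGroup.toWord (e.symm w')).length
          = (FreeGroup.toWord (e.symm (w * w'))).length →
      CyclRedWord (FreeGroup.toWord (e.symm (w * w'))) →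
      countA a w + countA a w' ≤ cyclCountA a (w * w') + C := by
  obtain ⟨C, hC⟩ := bounded_cancellation e
  refine ⟨4 * C, fun w w' hlen hcyc => ?_⟩
  have hsplit : w.norm + w'.norm ≤ (w * w').norm + 2 * C := by
    simpa using hC (e.symm w) (e.symm w') (by rw [← _root_.map_mul]; exact hlen)
  have hsquare : (w * w').norm + (w * w').norm ≤ (w * w' * (w * w')).norm + 2 * C := by
    have hu := isReduced_toWord.isCyclicallyReduced_of_cyclRedWord hcyc
    simpa using hC _ _ (norm_mul_self_of_isCyclicallyReduced hu).symm
  have := countA_add_countA_add_norm_mul_le a w w'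
  have := countA_le_cyclCountA_add a hsquare
  omega
end

section
/- Let X be a δ-hyperbolic geodesic metric space. Suppose β : [0, 2d] → X is a path that is the concatenation of two geodesics of length d (from x to y and from y to w), and suppose d(x, w) ≥ 2d − 2C for some C ≥ 0. Then β is a (1, 6C + 16δ)-quasi-geodesic. -/
/-- `f` restricted to `[a,b]` is a geodesic (parametrized by arclength). -/
def IsGeodesicOn {X : Type*} [MetricSpace X] (f : ℝ → X) (a b : ℝ) : Prop :=
  ∀ s ∈ Set.Icc a b, ∀ t ∈ Set.Icc a b, dist (f s) (f t) = |s - t|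

/-- `X` is a geodesic metric space: any two points are joined by a geodesic. -/
def GeodSpace (X : Type*) [MetricSpace X] : Prop :=
  ∀ x y : X, ∃ f : ℝ → X, IsGeodesicOn f 0 (dist x y) ∧ f 0 = x ∧ f (dist x y) = y

/-- `X` is `δ`-hyperbolic: each side of any geodesic triangle lies in the
`δ`-neighborhood of the union of the other two sides. -/
def DeltaHyp (X : Type*) [MetricSpace X] (δ : ℝ) : Prop :=
  ∀ (T₁ T₂ T₃ : ℝ) (f g h : ℝ → X),
    IsGeodesicOn f 0 T₁ → IsGeodesicOn g 0 T₂ → IsGeodesicOn h 0 T₃ →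
    f 0 = h 0 → f T₁ = g 0 → g T₂ = h T₃ →
    ∀ t ∈ Set.Icc (0 : ℝ) T₃, ∃ s : ℝ,
      (s ∈ Set.Icc (0 : ℝ) T₁ ∧ dist (h t) (f s) ≤ δ) ∨
      (s ∈ Set.Icc (0 : ℝ) T₂ ∧ dist (h t) (g s) ≤ δ)

/-! A concatenation of two geodesics is `1`-Lipschitz, which gives the upper bound. For the
lower bound, the triangle inequality through `β s` and `β t` shows that the path loses at most
the defect `2d - dist (β 0) (β (2d)) ≤ 2C` against `|s - t|`. -/

open Set

section

variable {X : Type*} [MetricSpace X] {f : ℝ → X} {a m b : ℝ}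

theorem IsGeodesicOn.lipschitzOnWith (hf : IsGeodesicOn f a b) :
    LipschitzOnWith 1 f (Icc a b) :=
  LipschitzOnWith.of_dist_le_mul fun s hs t ht => by
    rw [hf s hs t ht, NNReal.coe_one, one_mul, Real.dist_eq]

theorem LipschitzOnWith.Icc_union_Icc {K : NNReal} (hl : LipschitzOnWith K f (Icc a m))
    (hr : LipschitzOnWith K f (Icc m b)) (ham : a ≤ m) (hmb : m ≤ b) :
    LipschitzOnWith K f (Icc a b) := by
  have hm : m ∈ Icc a m ∩ Icc m b := ⟨right_mem_Icc.2 ham, left_mem_Icc.2 hmb⟩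
  have cross : ∀ s ∈ Icc a m, ∀ t ∈ Icc m b, dist (f s) (f t) ≤ K * dist s t := by
    intro s hs t ht
    calc dist (f s) (f t) ≤ dist (f s) (f m) + dist (f m) (f t) := dist_triangle _ _ _
      _ ≤ K * dist s m + K * dist m t :=
          add_le_add (hl.dist_le_mul s hs m hm.1) (hr.dist_le_mul m hm.2 t ht)
      _ = K * dist s t := by
          rw [← mul_add, Real.dist_eq, Real.dist_eq, Real.dist_eq,
            abs_of_nonpos (sub_nonpos.2 hs.2), abs_of_nonpos (sub_nonpos.2 ht.1),
            abs_of_nonpos (sub_nonpos.2 (hs.2.trans ht.1))]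
          ring
  rw [← Icc_union_Icc_eq_Icc ham hmb]
  refine LipschitzOnWith.of_dist_le_mul ?_
  rintro s (hs | hs) t (ht | ht)
  · exact hl.dist_le_mul s hs t ht
  · exact cross s hs t ht
  · rw [dist_comm, dist_comm s]
    exact cross t ht s hs
  · exact hr.dist_le_mul s hs t ht

theorem LipschitzOnWith.abs_sub_sub_le_dist (hf : LipschitzOnWith 1 f (Icc a b)) {s t : ℝ}
    (hs : s ∈ Icc a b) (ht : t ∈ Icc a b) :
    |s - t| - ((b - a) - dist (f a) (f b)) ≤ dist (f s) (f t) := by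
  wlog hst : s ≤ t generalizing s t
  · rw [abs_sub_comm, dist_comm (f s)]
    exact this ht hs (le_of_not_ge hst)
  have hab : a ≤ b := hs.1.trans hs.2
  have has := hf.dist_le_mul a (left_mem_Icc.2 hab) s hs
  have htb := hf.dist_le_mul t ht b (right_mem_Icc.2 hab)
  simp only [NNReal.coe_one, one_mul, Real.dist_eq] at has htb
  rw [abs_of_nonpos (sub_nonpos.2 hs.1)] at has
  rw [abs_of_nonpos (sub_nonpos.2 ht.2)] at htb
  rw [abs_of_nonpos (sub_nonpos.2 hst)]
  linarith [dist_triangle4 (f a) (f s) (f t) (f b)]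

end

theorem stmt11_general {X : Type*} [MetricSpace X] (δ C d : ℝ)
    (hδ : 0 ≤ δ) (hC : 0 ≤ C) (hd : 0 ≤ d)
    (β : ℝ → X)
    (h1 : IsGeodesicOn β 0 d) (h2 : IsGeodesicOn β d (2 * d))
    (hK : 2 * d - 2 * C ≤ dist (β 0) (β (2 * d))) :
    ∀ s ∈ Set.Icc (0 : ℝ) (2 * d), ∀ t ∈ Set.Icc (0 : ℝ) (2 * d),
      |s - t| - (6 * C + 16 * δ) ≤ dist (β s) (β t) ∧
      dist (β s) (β t) ≤ |s - t| + (6 * C + 16 * δ) := by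
  intro s hs t ht
  have hβ : LipschitzOnWith 1 β (Icc 0 (2 * d)) :=
    h1.lipschitzOnWith.Icc_union_Icc h2.lipschitzOnWith hd (by linarith)
  have upper : dist (β s) (β t) ≤ |s - t| := by
    simpa [Real.dist_eq] using hβ.dist_le_mul s hs t ht
  have lower := hβ.abs_sub_sub_le_dist hs ht
  constructor <;> linarith

/-- In a δ-hyperbolic geodesic space, the concatenation of two geodesics of length `d`
whose endpoints are at distance at least `2d − 2C` is a `(1, 6C + 16δ)`-quasi-geodesic. -/
theorem stmt11 {X : Type*} [MetricSpace X] (δ C d : ℝ)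
    (hδ : 0 ≤ δ) (hC : 0 ≤ C) (hd : 0 ≤ d)
    (hgeo : GeodSpace X) (hhyp : DeltaHyp X δ) (β : ℝ → X)
    (h1 : IsGeodesicOn β 0 d) (h2 : IsGeodesicOn β d (2 * d))
    (hK : 2 * d - 2 * C ≤ dist (β 0) (β (2 * d))) :
    ∀ s ∈ Set.Icc (0 : ℝ) (2 * d), ∀ t ∈ Set.Icc (0 : ℝ) (2 * d),
      |s - t| - (6 * C + 16 * δ) ≤ dist (β s) (β t) ∧
      dist (β s) (β t) ≤ |s - t| + (6 * C + 16 * δ) :=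
  stmt11_general δ C d hδ hC hd β h1 h2 hK
end

section
/- Let X be a δ-hyperbolic space, let f, g be isometries of X, and suppose f has attracting/repelling fixed points A₊, A₋ on the Gromov boundary ∂X with g·A₊ ≠ A₋ and f has nonzero stable translation length. Then there exists M ≥ 0 such that for all m ≥ M, the isometry f^m g has nonzero stable translation length. -/
/-!
Fix a base point `x`. In a space satisfying the four-point condition with constant `δ`, an isometry
`φ` whose backtracking `P = (x · φ²x)_{φx}` is small compared with its displacement, namely
`2P + 4δ < d(x, φx)`, moves `x` along a quasi-geodesic: by induction on `j - i`, the point `φⁱx`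
satisfies `(x · φʲx)_{φⁱx} ≤ P + 2δ` for `i ≤ j`. Hence `d(x, φⁿx)` grows linearly in `n`, and
the Gromov products `(φⁱx · φʲx)_x` tend to infinity.

A positive stable translation length makes a power of `f` (and of `f⁻¹`) satisfy this criterion,
so `(fⁿx)` and `(f⁻ⁿx)` converge at infinity, to `A₊` and `A₋`. As `(g fⁿx · f⁻ⁿx)_x` does not tend
to infinity, the four-point condition bounds `(fᵐx · g⁻¹f⁻ᵐx)_x`, and with it the backtracking of
`fᵐg`, uniformly in large `m`, while `d(x, fᵐg x) ≥ d(x, fᵐx) - d(x, gx)` grows linearly in `m`.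
So `fᵐg` satisfies the criterion once `m` is large.
-/

open Filter Set Topology

section

variable {X : Type*} [MetricSpace X]

noncomputable def gromovProduct (w x y : X) : ℝ := (dist w x + dist w y - dist x y) / 2

theorem gromovProduct_comm (w x y : X) : gromovProduct w x y = gromovProduct w y x := by
  simp only [gromovProduct, dist_comm x y, add_comm (dist w x)]

theorem gromovProduct_nonneg (w x y : X) : 0 ≤ gromovProduct w x y := by
  have := dist_triangle_left x y w
  simp only [gromovProduct]; linarith

theorem gromovProduct_self_left (w y : X) : gromovProduct w w y = 0 := by
  simp [gromovProduct]

theorem gromovProduct_self_right (w x : X) : gromovProduct w x w = 0 := by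
  simp [gromovProduct, dist_comm x w]

theorem two_mul_gromovProduct (w x y : X) :
    2 * gromovProduct w x y = dist w x + dist w y - dist x y := by
  simp only [gromovProduct]; ring

theorem gromovProduct_add_gromovProduct (x y z : X) :
    gromovProduct x z y + gromovProduct y z x = dist x y := by
  simp only [gromovProduct, dist_comm y x, dist_comm y z, dist_comm z x]; ring

theorem gromovProduct_le_dist_of_dist_add_dist_eq {w x y q : X}
    (hq : dist x q + dist q y = dist x y) : gromovProduct w x y ≤ dist w q := by
  have := dist_triangle_right w x q
  have := dist_triangle w q y
  simp only [gromovProduct]; linarith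

theorem gromovProduct_le_add_dist_base (w w' x y : X) :
    gromovProduct w x y ≤ gromovProduct w' x y + dist w w' := by
  have := dist_triangle w w' x
  have := dist_triangle w w' y
  simp only [gromovProduct]; linarith

theorem gromovProduct_le_add_dist_right (w x y y' : X) :
    gromovProduct w x y ≤ gromovProduct w x y' + dist y y' := by
  have h₁ := dist_triangle w y' y
  have h₂ := dist_triangle x y y'
  rw [dist_comm y' y] at h₁
  simp only [gromovProduct]; linarith

theorem gromovProduct_le_add_dist_add_dist (w x x' y y' : X) :
    gromovProduct w x y ≤ gromovProduct w x' y' + dist x x' + dist y y' := by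
  have := gromovProduct_le_add_dist_right w x y y'
  have := gromovProduct_le_add_dist_right w y' x x'
  rw [gromovProduct_comm w y' x, gromovProduct_comm w y'] at this
  linarith

theorem Isometry.gromovProduct_map {φ : X → X} (hφ : Isometry φ) (w x y : X) :
    gromovProduct (φ w) (φ x) (φ y) = gromovProduct w x y := by
  simp only [gromovProduct, hφ.dist_eq]

theorem Isometry.iterate {φ : X → X} (hφ : Isometry φ) (n : ℕ) : Isometry φ^[n] := by
  induction n with
  | zero => exact isometry_id
  | succ n ih => rw [Function.iterate_succ']; exact hφ.comp ih

theorem Isometry.dist_iterate_succ {φ : X → X} (hφ : Isometry φ) (x : X) (i : ℕ) :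
    dist (φ^[i] x) (φ^[i + 1] x) = dist x (φ x) := by
  rw [Function.iterate_succ_apply, (hφ.iterate i).dist_eq]

theorem Isometry.dist_iterate_le {φ : X → X} (hφ : Isometry φ) (x : X) (n : ℕ) :
    dist x (φ^[n] x) ≤ n * dist x (φ x) := by
  have := dist_le_range_sum_dist (fun i => φ^[i] x) n
  simpa only [Function.iterate_zero_apply, hφ.dist_iterate_succ, Finset.sum_const,
    Finset.card_range, nsmul_eq_mul] using this

theorem Isometry.liminf_dist_iterate_div_pos {φ : X → X} (hφ : Isometry φ) {x : X} {c : ℝ}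
    (hc : 0 < c) (hx : ∀ n : ℕ, n * c ≤ dist x (φ^[n] x)) (y : X) :
    0 < liminf (fun n : ℕ => dist y (φ^[n] y) / n) atTop := by
  have hlow : ∀ᶠ n : ℕ in atTop, c - 2 * dist x y / n ≤ dist y (φ^[n] y) / n := by
    filter_upwards [eventually_gt_atTop 0] with n _
    have := dist_triangle4 x y (φ^[n] y) (φ^[n] x)
    rw [(hφ.iterate n).dist_eq, dist_comm y x] at this
    rw [sub_le_iff_le_add, ← add_div, le_div_iff₀ (by positivity)]
    linarith [hx n]
  have hup (n : ℕ) : dist y (φ^[n] y) / n ≤ dist y (φ y) := by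
    rcases Nat.eq_zero_or_pos n with rfl | hn
    · simp
    · rw [div_le_iff₀ (by positivity), mul_comm]; exact hφ.dist_iterate_le y n
  have hlim : Tendsto (fun n : ℕ => c - 2 * dist x y / n) atTop (𝓝 c) := by
    simpa using tendsto_const_nhds.sub (tendsto_const_div_atTop_nhds_zero_nat (2 * dist x y))
  calc 0 < c := hc
    _ = liminf (fun n : ℕ => c - 2 * dist x y / n) atTop := hlim.liminf_eq.symm
    _ ≤ _ := liminf_le_liminf hlow hlim.isBoundedUnder_ge
      (isBoundedUnder_of ⟨dist y (φ y), hup⟩).isCoboundedUnder_ge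

theorem IsometryEquiv.dist_symm_iterate (f : X ≃ᵢ X) (x : X) (n : ℕ) :
    dist x ((⇑f.symm)^[n] x) = dist x ((⇑f)^[n] x) := by
  rw [← (f.isometry.iterate n).dist_eq,
    Function.LeftInverse.iterate f.apply_symm_apply n, dist_comm]

theorem IsometryEquiv.gromovProduct_symm_le (e : X ≃ᵢ X) (w x y : X) :
    gromovProduct w x (e.symm y) ≤ gromovProduct w (e x) y + dist w (e w) := by
  calc gromovProduct w x (e.symm y) = gromovProduct (e w) (e x) (e (e.symm y)) :=
        (e.isometry.gromovProduct_map _ _ _).symm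
    _ ≤ gromovProduct w (e x) y + dist (e w) w := by
        rw [e.apply_symm_apply]; exact gromovProduct_le_add_dist_base _ _ _ _
    _ = gromovProduct w (e x) y + dist w (e w) := by rw [dist_comm]

theorem IsometryEquiv.gromovProduct_iterate_comp_le (f g : X ≃ᵢ X) (m : ℕ) (x : X) :
    gromovProduct (f^[m] (g x)) x (f^[m] (g (f^[m] (g x)))) ≤
      gromovProduct x (f^[m] x) (g.symm (f.symm^[m] x)) + dist x (g x) := by
  have hinv (y : X) : g.symm (f.symm^[m] (f^[m] (g y))) = y := by
    rw [Function.LeftInverse.iterate f.symm_apply_apply m, g.symm_apply_apply]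
  have := (g.symm.isometry.comp (f.symm.isometry.iterate m)).gromovProduct_map
    (f^[m] (g x)) x (f^[m] (g (f^[m] (g x))))
  simp only [Function.comp_apply, hinv] at this
  rw [← this, gromovProduct_comm x (f^[m] x)]
  have := gromovProduct_le_add_dist_right x (g.symm (f.symm^[m] x)) (f^[m] (g x)) (f^[m] x)
  rwa [(f.isometry.iterate m).dist_eq, dist_comm] at this

/-- `a` converges at infinity; such sequences represent the points of the Gromov boundary. -/
def ConvergesAtInfinity (w : X) (a : ℕ → X) : Prop :=
  Tendsto (fun p : ℕ × ℕ => gromovProduct w (a p.1) (a p.2)) (atTop ×ˢ atTop) atTop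

theorem ConvergesAtInfinity.map {w : X} {a : ℕ → X} (h : ConvergesAtInfinity w a) {φ : X → X}
    (hφ : Isometry φ) : ConvergesAtInfinity w fun n => φ (a n) := by
  refine tendsto_atTop_mono (fun p => ?_) (tendsto_atTop_add_const_right _ (-dist (φ w) w) h)
  have := gromovProduct_le_add_dist_base (φ w) w (φ (a p.1)) (φ (a p.2))
  rw [hφ.gromovProduct_map] at this
  linarith

theorem tendsto_atTop_of_tendsto_div_natCast {u : ℕ → ℝ} {t : ℝ} (ht : 0 < t)
    (hu : Tendsto (fun n => u n / n) atTop (𝓝 t)) : Tendsto u atTop atTop :=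
  (hu.pos_mul_atTop ht tendsto_natCast_atTop_atTop).congr' <|
    (eventually_ne_atTop 0).mono fun _ hn => div_mul_cancel₀ _ (Nat.cast_ne_zero.2 hn)

theorem exists_pos_add_lt_apply_two_mul {u : ℕ → ℝ} {t : ℝ} (ht : 0 < t)
    (hu : Tendsto (fun n => u n / n) atTop (𝓝 t)) (c : ℝ) :
    ∃ k, 0 < k ∧ u k + c < u (2 * k) := by
  have hv : Tendsto (fun k : ℕ => (u (2 * k) - u k) / k) atTop (𝓝 t) := by
    have h2 := ((hu.comp (tendsto_id.const_mul_atTop' two_pos)).const_mul 2).sub hu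
    rw [two_mul t, add_sub_cancel_right] at h2
    refine h2.congr' ((eventually_ne_atTop 0).mono fun k hk => ?_)
    simp only [Function.comp_apply, id, Nat.cast_mul, Nat.cast_ofNat]
    field_simp
  obtain ⟨k, hk, hgap⟩ := ((eventually_gt_atTop 0).and
    ((tendsto_atTop_of_tendsto_div_natCast ht hv).eventually_gt_atTop c)).exists
  exact ⟨k, hk, by linarith⟩

theorem IsGeodesicOn.dist_zero {σ : ℝ → X} {T s : ℝ} (hσ : IsGeodesicOn σ 0 T)
    (hs : s ∈ Icc 0 T) : dist (σ 0) (σ s) = s := by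
  rw [hσ 0 ⟨le_rfl, hs.1.trans hs.2⟩ s hs, zero_sub, abs_neg, abs_of_nonneg hs.1]

theorem IsGeodesicOn.dist_add_dist {σ : ℝ → X} {T s : ℝ} (hσ : IsGeodesicOn σ 0 T)
    (hs : s ∈ Icc 0 T) : dist (σ 0) (σ s) + dist (σ s) (σ T) = T := by
  rw [hσ.dist_zero hs, hσ s hs T ⟨hs.1.trans hs.2, le_rfl⟩, abs_of_nonpos (by linarith [hs.2])]
  ring

theorem DeltaHyp.exists_dist_le {δ : ℝ} (hgeo : GeodSpace X) (hhyp : DeltaHyp X δ)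
    {x z : X} {σ : ℝ → X} (hσ : IsGeodesicOn σ 0 (dist x z)) (hσ0 : σ 0 = x)
    (hσ1 : σ (dist x z) = z) (y : X) {s : ℝ} (hs : s ∈ Icc 0 (dist x z)) :
    ∃ q, dist (σ s) q ≤ δ ∧
      (dist x q + dist q y = dist x y ∨ dist y q + dist q z = dist y z) := by
  obtain ⟨τ₁, hτ₁, hτ₁0, hτ₁1⟩ := hgeo x y
  obtain ⟨τ₂, hτ₂, hτ₂0, hτ₂1⟩ := hgeo y z
  obtain ⟨r, ⟨hr, hq⟩ | ⟨hr, hq⟩⟩ := hhyp _ _ _ τ₁ τ₂ σ hτ₁ hτ₂ hσ (hτ₁0.trans hσ0.symm)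
    (hτ₁1.trans hτ₂0.symm) (hτ₂1.trans hσ1.symm) s hs
  · exact ⟨τ₁ r, hq, .inl (by simpa only [hτ₁0, hτ₁1] using hτ₁.dist_add_dist hr)⟩
  · exact ⟨τ₂ r, hq, .inr (by simpa only [hτ₂0, hτ₂1] using hτ₂.dist_add_dist hr)⟩

theorem dist_le_gromovProduct_add_of_dist_le {δ : ℝ} {w x z p q : X}
    (hp : dist x p = gromovProduct x w z) (hq : dist x q + dist q w = dist x w)
    (hpq : dist p q ≤ δ) : dist w p ≤ gromovProduct w x z + 2 * δ := by
  have h₁ := dist_triangle w q p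
  have h₂ := dist_triangle x q p
  have h₃ := gromovProduct_add_gromovProduct x w z
  rw [gromovProduct_comm x z, gromovProduct_comm w z] at h₃
  rw [dist_comm q p] at h₁ h₂
  rw [dist_comm w q] at h₁
  linarith

def FourPointHyperbolic (X : Type*) [MetricSpace X] (δ : ℝ) : Prop :=
  ∀ w x y z : X, min (gromovProduct w x y) (gromovProduct w y z) ≤ gromovProduct w x z + δ

theorem DeltaHyp.fourPointHyperbolic {δ : ℝ} (hgeo : GeodSpace X) (hhyp : DeltaHyp X δ) :
    FourPointHyperbolic X (3 * δ) := by
  -- The internal point `p` on `[x, z]` of the triangle `x w z` is `(x · z)_w + 2δ`-close to `w`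
  -- and `δ`-close to some `q ∈ [x, y] ∪ [y, z]`, while `(x · y)_w ≤ d(w, q)` for `q ∈ [x, y]`.
  intro w x y z
  obtain ⟨σ, hσ, hσ0, hσ1⟩ := hgeo x z
  have hs : gromovProduct x w z ∈ Icc 0 (dist x z) :=
    ⟨gromovProduct_nonneg x w z, (gromovProduct_comm x w z).trans_le
      (gromovProduct_le_dist_of_dist_add_dist_eq (by rw [dist_self, zero_add]))⟩
  set p := σ (gromovProduct x w z)
  have hxp : dist x p = gromovProduct x w z := by
    have := hσ.dist_zero hs
    rwa [hσ0] at this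
  have hzp : dist z p = gromovProduct z w x := by
    have hpz := hσ.dist_add_dist hs
    rw [hσ0, hσ1] at hpz
    have := gromovProduct_add_gromovProduct x z w
    rw [dist_comm z p]
    linarith
  have hwp : dist w p ≤ gromovProduct w x z + 2 * δ := by
    obtain ⟨q, hpq, hq | hq⟩ := hhyp.exists_dist_le hgeo hσ hσ0 hσ1 w hs
    · exact dist_le_gromovProduct_add_of_dist_le hxp hq hpq
    · rw [gromovProduct_comm]
      refine dist_le_gromovProduct_add_of_dist_le hzp ?_ hpq
      rw [dist_comm z q, dist_comm q w, dist_comm z w]; linarith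
  obtain ⟨q, hpq, hq | hq⟩ := hhyp.exists_dist_le hgeo hσ hσ0 hσ1 y hs
  · calc min (gromovProduct w x y) (gromovProduct w y z)
        ≤ gromovProduct w x y := min_le_left _ _
      _ ≤ dist w q := gromovProduct_le_dist_of_dist_add_dist_eq hq
      _ ≤ dist w p + dist p q := dist_triangle _ _ _
      _ ≤ gromovProduct w x z + 3 * δ := by linarith
  · calc min (gromovProduct w x y) (gromovProduct w y z)
        ≤ gromovProduct w y z := min_le_right _ _
      _ ≤ dist w q := gromovProduct_le_dist_of_dist_add_dist_eq hq
      _ ≤ dist w p + dist p q := dist_triangle _ _ _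
      _ ≤ gromovProduct w x z + 3 * δ := by linarith

namespace FourPointHyperbolic

variable {δ : ℝ}

theorem nonneg (hX : FourPointHyperbolic X δ) (x : X) : 0 ≤ δ := by
  simpa [gromovProduct_self_left] using hX x x x x

theorem gromovProduct_le_of_lt (hX : FourPointHyperbolic X δ) {w x y z : X} {c : ℝ}
    (hxz : gromovProduct w x z ≤ c) (hxy : c + δ < gromovProduct w x y) :
    gromovProduct w y z ≤ c + δ := by
  rcases min_le_iff.1 (hX w x y z) with h | h <;> linarith

section Orbit

variable {φ : X → X} {x : X}

theorem gromovProduct_iterate_succ_le (hX : FourPointHyperbolic X δ) (hφ : Isometry φ)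
    (hφx : 2 * gromovProduct (φ x) x (φ (φ x)) + 4 * δ < dist x (φ x)) (i : ℕ) :
    gromovProduct (φ^[i] x) x (φ^[i + 1] x) ≤ gromovProduct (φ x) x (φ (φ x)) + δ := by
  set P := gromovProduct (φ x) x (φ (φ x))
  induction i with
  | zero =>
    simpa [gromovProduct_self_left] using add_nonneg (gromovProduct_nonneg _ _ _) (hX.nonneg x)
  | succ i ih =>
    have hback : gromovProduct (φ^[i + 1] x) (φ^[i] x) (φ^[i + 2] x) = P := by
      simpa only [Function.iterate_succ_apply] using
        (hφ.iterate i).gromovProduct_map (φ x) x (φ (φ x))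
    have := gromovProduct_add_gromovProduct (φ^[i] x) (φ^[i + 1] x) x
    rw [gromovProduct_comm (φ^[i + 1] x) x, hφ.dist_iterate_succ] at this
    exact hX.gromovProduct_le_of_lt hback.le (by linarith [hX.nonneg x])

theorem mul_le_dist_iterate (hX : FourPointHyperbolic X δ) (hφ : Isometry φ)
    (hφx : 2 * gromovProduct (φ x) x (φ (φ x)) + 4 * δ < dist x (φ x)) (n : ℕ) :
    n * (dist x (φ x) - 2 * gromovProduct (φ x) x (φ (φ x)) - 2 * δ) ≤ dist x (φ^[n] x) := by
  induction n with
  | zero => simp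
  | succ n ih =>
    have := hX.gromovProduct_iterate_succ_le hφ hφx n
    have := two_mul_gromovProduct (φ^[n] x) x (φ^[n + 1] x)
    rw [hφ.dist_iterate_succ, dist_comm (φ^[n] x) x] at this
    push_cast
    linarith

theorem gromovProduct_iterate_add_le (hX : FourPointHyperbolic X δ) (hφ : Isometry φ)
    (hφx : 2 * gromovProduct (φ x) x (φ (φ x)) + 4 * δ < dist x (φ x)) (k i : ℕ) :
    gromovProduct (φ^[i] x) x (φ^[i + k] x) ≤ gromovProduct (φ x) x (φ (φ x)) + 2 * δ := by
  induction k generalizing i with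
  | zero =>
    simpa [gromovProduct_self_right] using
      add_nonneg (gromovProduct_nonneg _ _ _) (mul_nonneg zero_le_two (hX.nonneg x))
  | succ k ih =>
    have hshift : gromovProduct (φ^[i + 1] x) (φ^[i] x) (φ^[i + (k + 1)] x) =
        gromovProduct (φ^[1] x) x (φ^[1 + k] x) := by
      rw [add_comm 1 k]
      simpa only [← Function.iterate_add_apply] using
        (hφ.iterate i).gromovProduct_map (φ^[1] x) x (φ^[k + 1] x)
    have hnear := hX.gromovProduct_iterate_succ_le hφ hφx i
    have := gromovProduct_add_gromovProduct (φ^[i] x) (φ^[i + 1] x) (φ^[i + (k + 1)] x)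
    rw [gromovProduct_comm (φ^[i + 1] x), hshift, gromovProduct_comm (φ^[i] x),
      hφ.dist_iterate_succ] at this
    have := hX.gromovProduct_le_of_lt ((gromovProduct_comm _ _ _).trans_le hnear)
      (by linarith [ih 1] : _ + δ < gromovProduct (φ^[i] x) (φ^[i + 1] x) (φ^[i + (k + 1)] x))
    rw [gromovProduct_comm]
    linarith

theorem le_gromovProduct_iterate (hX : FourPointHyperbolic X δ) (hφ : Isometry φ)
    (hφx : 2 * gromovProduct (φ x) x (φ (φ x)) + 4 * δ < dist x (φ x)) (i j : ℕ) :
    min i j * (dist x (φ x) - 2 * gromovProduct (φ x) x (φ (φ x)) - 2 * δ)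
      - gromovProduct (φ x) x (φ (φ x)) - 2 * δ ≤ gromovProduct x (φ^[i] x) (φ^[j] x) := by
  wlog hij : i ≤ j generalizing i j
  · rw [min_comm, gromovProduct_comm x]; exact this j i (le_of_not_ge hij)
  obtain ⟨k, rfl⟩ := Nat.exists_eq_add_of_le hij
  have := gromovProduct_add_gromovProduct x (φ^[i] x) (φ^[i + k] x)
  rw [gromovProduct_comm x, gromovProduct_comm (φ^[i] x)] at this
  rw [min_eq_left hij]
  linarith [hX.mul_le_dist_iterate hφ hφx i, hX.gromovProduct_iterate_add_le hφ hφx k i]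

theorem liminf_dist_iterate_div_pos (hX : FourPointHyperbolic X δ) (hφ : Isometry φ)
    (hφx : 2 * gromovProduct (φ x) x (φ (φ x)) + 4 * δ < dist x (φ x)) (y : X) :
    0 < liminf (fun n : ℕ => dist y (φ^[n] y) / n) atTop :=
  hφ.liminf_dist_iterate_div_pos (by linarith [hX.nonneg x]) (hX.mul_le_dist_iterate hφ hφx) y

end Orbit

theorem convergesAtInfinity_iterate (hX : FourPointHyperbolic X δ) {F : X → X}
    (hF : Isometry F) {x : X} {t : ℝ} (ht : 0 < t)
    (hst : Tendsto (fun n : ℕ => dist x (F^[n] x) / n) atTop (𝓝 t)) :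
    ConvergesAtInfinity x fun n => F^[n] x := by
  obtain ⟨k, hk, hgap⟩ := exists_pos_add_lt_apply_two_mul ht hst (4 * δ)
  have hφx : 2 * gromovProduct (F^[k] x) x (F^[k] (F^[k] x)) + 4 * δ < dist x (F^[k] x) := by
    rw [two_mul_gromovProduct, dist_comm _ x, (hF.iterate k).dist_eq,
      ← Function.iterate_add_apply]
    rw [two_mul k] at hgap
    linarith
  set P := gromovProduct (F^[k] x) x (F^[k] (F^[k] x))
  set c := dist x (F^[k] x) - 2 * P - 2 * δ
  have hc : 0 < c := by linarith [hX.nonneg x]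
  have hrem (n : ℕ) : dist (F^[k * (n / k)] x) (F^[n] x) ≤ k * dist x (F x) := by
    have hn : F^[n] x = F^[k * (n / k)] (F^[n % k] x) := by
      rw [← Function.iterate_add_apply, Nat.div_add_mod]
    rw [hn, (hF.iterate _).dist_eq]
    exact (hF.dist_iterate_le x _).trans
      (mul_le_mul_of_nonneg_right (by exact_mod_cast (Nat.mod_lt n hk).le) dist_nonneg)
  have hlow (p : ℕ × ℕ) : min (p.1 / k) (p.2 / k) * c - P - 2 * δ - 2 * (k * dist x (F x)) ≤
      gromovProduct x (F^[p.1] x) (F^[p.2] x) := by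
    have := hX.le_gromovProduct_iterate (hF.iterate k) hφx (p.1 / k) (p.2 / k)
    rw [← Function.iterate_mul, ← Function.iterate_mul] at this
    have := gromovProduct_le_add_dist_add_dist x (F^[k * (p.1 / k)] x) (F^[p.1] x)
      (F^[k * (p.2 / k)] x) (F^[p.2] x)
    linarith [hrem p.1, hrem p.2]
  have hmin : Tendsto (fun p : ℕ × ℕ => min (p.1 / k) (p.2 / k)) (atTop ×ˢ atTop) atTop :=
    tendsto_inf_atTop _ ((Nat.tendsto_div_const_atTop hk.ne').comp tendsto_fst)
      ((Nat.tendsto_div_const_atTop hk.ne').comp tendsto_snd)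
  refine tendsto_atTop_mono hlow ((tendsto_atTop_add_const_right _
    (-(P + 2 * δ + 2 * (k * dist x (F x))))
    ((tendsto_natCast_atTop_atTop.comp hmin).atTop_mul_const hc)).congr fun p => ?_)
  simp only [Function.comp_apply]
  ring

theorem eventually_gromovProduct_le (hX : FourPointHyperbolic X δ) {w : X} {a b : ℕ → X}
    (ha : ConvergesAtInfinity w a) (hb : ConvergesAtInfinity w b) {K : ℝ}
    (hab : ∃ᶠ n in atTop, gromovProduct w (a n) (b n) ≤ K) :
    ∀ᶠ m in atTop, gromovProduct w (a m) (b m) ≤ K + 2 * δ := by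
  obtain ⟨n, hn, ha', hb'⟩ := (hab.and_eventually ((ha.eventually_gt_atTop (K + δ)).curry.and
    (hb.eventually_gt_atTop (K + δ + δ)).curry)).exists
  filter_upwards [ha', hb'] with m ham hbm
  have h1 := hX.gromovProduct_le_of_lt hn ham
  have h2 := hX.gromovProduct_le_of_lt ((gromovProduct_comm _ _ _).trans_le h1) hbm
  rw [gromovProduct_comm]
  linarith

end FourPointHyperbolic

end

theorem stmt12_general {X : Type*} [MetricSpace X] (δ : ℝ)
    (hgeo : GeodSpace X) (hhyp : DeltaHyp X δ)
    (f g : X ≃ᵢ X) (t : ℝ) (ht : 0 < t)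
    (hstable : ∀ x : X,
      Filter.Tendsto (fun n : ℕ => dist x ((⇑f)^[n] x) / n) Filter.atTop (nhds t))
    (x₀ : X)
    (hne : ¬ Filter.Tendsto (fun n : ℕ =>
        (dist (g ((⇑f)^[n] x₀)) x₀ + dist ((⇑f.symm)^[n] x₀) x₀
          - dist (g ((⇑f)^[n] x₀)) ((⇑f.symm)^[n] x₀)) / 2)
      Filter.atTop Filter.atTop) :
    ∃ M : ℕ, ∀ m ≥ M, ∀ x' : X,
      0 < Filter.liminf
        (fun n : ℕ => dist x' ((fun y => (⇑f)^[m] (g y))^[n] x') / n) Filter.atTop := by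
  have hX := hhyp.fourPointHyperbolic hgeo
  have hf := hX.convergesAtInfinity_iterate f.isometry ht (hstable x₀)
  have hf' := (hX.convergesAtInfinity_iterate f.symm.isometry ht
    ((hstable x₀).congr fun n => by rw [f.dist_symm_iterate])).map g.symm.isometry
  simp only [tendsto_atTop, not_forall, not_eventually, not_le] at hne
  obtain ⟨K, hK⟩ := hne
  have hback := hX.eventually_gromovProduct_le hf hf' (K := K + dist x₀ (g x₀))
    (hK.mono fun n hn => (g.gromovProduct_symm_le _ _ _).trans (by
      rw [gromovProduct, dist_comm x₀, dist_comm x₀]; linarith))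
  have hdisp := (tendsto_atTop_of_tendsto_div_natCast ht (hstable x₀)).eventually_gt_atTop
    (2 * K + 5 * dist x₀ (g x₀) + 24 * δ)
  refine eventually_atTop.1 ?_
  filter_upwards [hback, hdisp] with m hback hdisp
  have hP := f.gromovProduct_iterate_comp_le g m x₀
  have hL := dist_triangle x₀ (f^[m] (g x₀)) (f^[m] x₀)
  rw [(f.isometry.iterate m).dist_eq, dist_comm (g x₀)] at hL
  exact hX.liminf_dist_iterate_div_pos ((f.isometry.iterate m).comp g.isometry) (by linarith)

/-- If `f` is an isometry of a δ-hyperbolic geodesic space with positive stable translation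
length, and `g` is an isometry such that `g·A₊ ≠ A₋` (expressed by the non-divergence of the
Gromov products `(g fⁿ(x₀) · f⁻ⁿ(x₀))_{x₀}`), then for all large `m` the isometry `fᵐg`
has nonzero stable translation length. -/
theorem stmt12 {X : Type*} [MetricSpace X] (δ : ℝ) (hδ : 0 ≤ δ)
    (hgeo : GeodSpace X) (hhyp : DeltaHyp X δ)
    (f g : X ≃ᵢ X) (t : ℝ) (ht : 0 < t)
    (hstable : ∀ x : X,
      Filter.Tendsto (fun n : ℕ => dist x ((⇑f)^[n] x) / n) Filter.atTop (nhds t))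
    (x₀ : X)
    (hne : ¬ Filter.Tendsto (fun n : ℕ =>
        (dist (g ((⇑f)^[n] x₀)) x₀ + dist ((⇑f.symm)^[n] x₀) x₀
          - dist (g ((⇑f)^[n] x₀)) ((⇑f.symm)^[n] x₀)) / 2)
      Filter.atTop Filter.atTop) :
    ∃ M : ℕ, ∀ m ≥ M, ∀ x' : X,
      0 < Filter.liminf
        (fun n : ℕ => dist x' ((fun y => (⇑f)^[m] (g y))^[n] x') / n) Filter.atTop :=
  stmt12_general δ hgeo hhyp f g t ht hstable x₀ hne
end

section
/- Let F be a free group of rank k ≥ 2 with basis 𝒜, and let g, h ∈ F be nontrivial with h cyclically reduced. If a₀ ∈ 𝒜 satisfies ⟨a₀^{±1}, g⟩_𝒜 > 0 (i.e., a₀ or a₀⁻¹ occurs in the reduced word for g), then ⟨a₀^{±1}, h⟩_𝒜 · ⟨a₀^{±1}, g⟩_𝒜 ≥ ⟨g^{±1}, h⟩_𝒜, where ⟨u^{±1}, v⟩_𝒜 counts occurrences of u or u⁻¹ as a subword of the cyclic word determined by v. -/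
/-- `⟨g^{±1}, h⟩`: the number of occurrences of the reduced word of `g` or of `g⁻¹`
as a subword of the cyclic word determined by the cyclically reduced word `l`. -/
def occCycOf {α : Type} [DecidableEq α] (g : FreeGroup α) (l : List (α × Bool)) : ℕ :=
  ((List.range l.length).filter (fun idx =>
      ((l ++ l).drop idx).take (FreeGroup.toWord g).length = FreeGroup.toWord g ∨
      ((l ++ l).drop idx).take (FreeGroup.toWord g⁻¹).length = FreeGroup.toWord g⁻¹)).length

namespace List

variable {β : Type*}

theorem getElem?_mod_length_of_take_drop_append_self_eq {L W : List β} {i j : ℕ} {x : β}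
    (hW : ((L ++ L).drop i).take W.length = W) (hx : W[j]? = some x) :
    L[(i + j) % L.length]? = some x := by
  have hj : j < W.length := (getElem?_eq_some_iff.mp hx).1
  have hLL : (L ++ L)[i + j]? = some x := by
    rw [← hx, ← hW, getElem?_take_of_lt hj, getElem?_drop]
  rcases lt_or_ge (i + j) L.length with hlt | hge
  · rwa [Nat.mod_eq_of_lt hlt, ← getElem?_append_left hlt]
  · have hlt : i + j < L.length + L.length := by
      simpa using (getElem?_eq_some_iff.mp hLL).1
    rwa [Nat.mod_eq_sub_mod hge, Nat.mod_eq_of_lt (by omega), ← getElem?_append_right hge]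

theorem length_filter_range_eq_card_filter (n : ℕ) (p : ℕ → Bool) :
    ((range n).filter p).length = ((Finset.range n).filter fun i => p i).card := by
  rw [← toFinset_card_of_nodup (nodup_range.filter p), toFinset_filter, toFinset_range]

theorem card_toFinset_findIdxs (L : List β) (q : β → Bool) :
    (L.findIdxs q).toFinset.card = (L.filter q).length := by
  rw [toFinset_card_of_nodup nodup_findIdxs, length_findIdxs, countP_eq_length_filter]

theorem length_filter_cyclic_occurrences_le [DecidableEq β] {L U V : List β} {q : β → Bool}
    {jU jV : ℕ} {u v : β} (hu : U[jU]? = some u) (hv : V[jV]? = some v)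
    (hqu : q u = true) (hqv : q v = true) (huv : u ≠ v) :
    ((range L.length).filter fun i =>
        ((L ++ L).drop i).take U.length = U ∨ ((L ++ L).drop i).take V.length = V).length
      ≤ (L.filter q).length := by
  set n := L.length
  set A : ℕ → Prop := fun i => ((L ++ L).drop i).take U.length = U
  set T := (Finset.range n).filter fun i => A i ∨ ((L ++ L).drop i).take V.length = V
  let offset : ℕ → ℕ := fun i => if A i then jU else jV
  let letter : ℕ → β := fun i => if A i then u else v
  let f : ℕ → ℕ := fun i => (i + offset i) % n
  have hletter : ∀ i ∈ T, L[f i]? = some (letter i) := by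
    intro i hi
    have hocc := (Finset.mem_filter.mp hi).2
    by_cases hA : A i
    · simpa [f, offset, letter, hA] using getElem?_mod_length_of_take_drop_append_self_eq hA hu
    · simpa [f, offset, letter, hA] using
        getElem?_mod_length_of_take_drop_append_self_eq (hocc.resolve_left hA) hv
  have hmaps : Set.MapsTo f T (L.findIdxs q).toFinset := by
    intro i hi
    have hfi := hletter i hi
    obtain ⟨hlt, hget⟩ := getElem?_eq_some_iff.mp hfi
    simp only [Finset.mem_coe, mem_toFinset, mem_findIdxs_iff_exists_getElem_pos]
    exact ⟨hlt, by rw [hget]; by_cases hA : A i <;> simp [letter, hA, hqu, hqv]⟩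
  have hinj : Set.InjOn f T := by
    intro x hx y hy hxy
    have hsame : letter x = letter y :=
      Option.some_injective _ ((hletter x hx).symm.trans (hxy ▸ hletter y hy))
    have hoffset : offset x = offset y := by
      by_cases hAx : A x <;> by_cases hAy : A y
      · simp only [offset, hAx, hAy, if_true]
      · exact absurd (by simpa [letter, hAx, hAy] using hsame) huv
      · exact absurd (by simpa [letter, hAx, hAy] using hsame.symm) huv
      · simp only [offset, hAx, hAy, if_false]
    have hxn : x < n := Finset.mem_range.mp (Finset.mem_filter.mp hx).1
    have hyn : y < n := Finset.mem_range.mp (Finset.mem_filter.mp hy).1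
    have hmod : x + offset x ≡ y + offset x [MOD n] := by
      simpa only [Nat.ModEq, f, hoffset] using hxy
    exact (Nat.ModEq.add_right_cancel' _ hmod).eq_of_lt_of_lt hxn hyn
  calc _ = T.card := by rw [length_filter_range_eq_card_filter]; simp [T, A]
    _ ≤ (L.findIdxs q).toFinset.card := Finset.card_le_card_of_injOn f hmaps hinj
    _ = (L.filter q).length := card_toFinset_findIdxs L q

end List

theorem occCycOf_le_length_filter {α : Type} [DecidableEq α] {g : FreeGroup α} {a₀ : α}
    (ha : 0 < countA a₀ g) (L : List (α × Bool)) :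
    occCycOf g L ≤ (L.filter fun p => p.1 = a₀).length := by
  obtain ⟨x, hxg, hx⟩ : ∃ x ∈ g.toWord, x.1 = a₀ := by
    simpa using List.exists_mem_of_length_pos ha
  have hxinv : (x.1, !x.2) ∈ g⁻¹.toWord := by
    rw [FreeGroup.toWord_inv, FreeGroup.invRev, List.mem_reverse, List.mem_map]
    exact ⟨x, hxg, rfl⟩
  obtain ⟨jU, hjU⟩ := List.mem_iff_getElem?.mp hxg
  obtain ⟨jV, hjV⟩ := List.mem_iff_getElem?.mp hxinv
  exact List.length_filter_cyclic_occurrences_le (q := fun p => decide (p.1 = a₀)) hjU hjV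
    (by simpa using hx) (by simpa using hx) (by simp [Prod.ext_iff])

theorem stmt16_general {α : Type} [DecidableEq α]
    (g h : FreeGroup α) (a₀ : α)
    (ha : 0 < countA a₀ g) :
    occCycOf g (FreeGroup.toWord h) ≤ countA a₀ h * countA a₀ g :=
  (occCycOf_le_length_filter ha h.toWord).trans (Nat.le_mul_of_pos_right _ ha)

/-- Every occurrence of `g^{±1}` in the cyclic word of `h` contains an occurrence of
`a₀^{±1}`, and each such occurrence is used at most `⟨a₀^{±1}, g⟩` times; hence
`⟨a₀^{±1}, h⟩ · ⟨a₀^{±1}, g⟩ ≥ ⟨g^{±1}, h⟩`. -/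
theorem stmt16 {α : Type} [Fintype α] [DecidableEq α] (hcard : 2 ≤ Fintype.card α)
    (g h : FreeGroup α) (hg : g ≠ 1) (hh : h ≠ 1)
    (hhred : CyclRedWord (FreeGroup.toWord h)) (a₀ : α)
    (ha : 0 < countA a₀ g) :
    occCycOf g (FreeGroup.toWord h) ≤ countA a₀ h * countA a₀ g :=
  stmt16_general g h a₀ ha
end
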